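/- arXiv:2411.01559 — 9 statements merged into one kernel-verified Lean document; each statement's English description precedes it below -/
import Mathlib

section
/- For g = 3 and any integer s ≥ 0, the lattice L(3,s) has a basis of minimal vectors: every nonzero v ∈ L(3,s) has squared Euclidean norm at least 8, and there exists a ℤ-basis of L(3,s) (consisting of 7+s vectors) all of whose elements have squared norm exactly 8. One such basis is {u − w_1 − w_2 − w_3, w_1, …, w_6, w_8, …, w_{7+s}}. -/
/-- The generator `w_k = 2e_k - 2e_0` in `ℤ^N`. -/
def wv (N k : ℕ) : Fin N → ℤ :=
  fun j => (if (j : ℕ) = k then 2 else 0) + (if (j : ℕ) = 0 then -2 else 0)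

/-- The generator `u = -(2g+1)e_0 + e_1 + ⋯ + e_{2g+1}` in `ℤ^(2g+2+s)`. -/
def uv (g s : ℕ) : Fin (2*g+2+s) → ℤ :=
  fun j => if (j : ℕ) = 0 then -(2*(g : ℤ)+1) else if (j : ℕ) ≤ 2*g+1 then 1 else 0

/-- The split hyperelliptic function field lattice `L(g,s)`, spanned by
`w_1, …, w_{2g+1+s}` and `u`. -/
def hyperL (g s : ℕ) : Submodule ℤ (Fin (2*g+2+s) → ℤ) :=
  Submodule.span ℤ
    ({uv g s} ∪ {v | ∃ k, 1 ≤ k ∧ k ≤ 2*g+1+s ∧ v = wv (2*g+2+s) k})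

/-- Pointwise values of the basis vectors. -/
def bval (i m : ℕ) : ℤ :=
  if i = 0 then (if m ≤ 3 then -1 else if m ≤ 7 then 1 else 0)
  else if i ≤ 6 then (if m = i then 2 else 0) + (if m = 0 then -2 else 0)
  else (if m = i + 1 then 2 else 0) + (if m = 0 then -2 else 0)

/-- The basis vectors. -/
def Bfun (s i : ℕ) : Fin (2*3+2+s) → ℤ :=
  if i = 0 then
    uv 3 s - wv (2*3+2+s) 1 - wv (2*3+2+s) 2 - wv (2*3+2+s) 3
  else if i ≤ 6 then wv (2*3+2+s) i
  else wv (2*3+2+s) (i + 1)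

lemma Bfun_apply (s i : ℕ) (j : Fin (2*3+2+s)) : Bfun s i j = bval i (j:ℕ) := by
  unfold Bfun bval
  split_ifs <;>
    (simp only [Pi.sub_apply, uv, wv]; split_ifs <;> first | omega | exact (‹False›).elim)

lemma sum_trunc (n t : ℕ) (f : ℕ → ℤ) (h : ∀ m, n ≤ m → f m = 0) :
    ∑ m ∈ Finset.range (n+t), f m = ∑ m ∈ Finset.range n, f m := by
  induction t with
  | zero => rfl
  | succ t ih =>
      rw [show n + (t+1) = (n+t)+1 by omega, Finset.sum_range_succ, h _ (by omega), add_zero, ih]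

lemma fin_sum_eval (n : ℕ) (v : Fin n → ℤ) (F : ℕ → ℤ) (h : ∀ j : Fin n, v j = F (j:ℕ)) :
    ∑ j, v j = ∑ m ∈ Finset.range n, F m := by
  rw [← Fin.sum_univ_eq_sum_range]
  exact Finset.sum_congr rfl fun j _ => h j

lemma wv_normsq (N k : ℕ) (hk0 : k ≠ 0) (hk : k < N) :
    ∑ j : Fin N, (wv N k j)^2 = 8 := by
  rw [fin_sum_eval N _ (fun m => (if m = k then (4:ℤ) else 0) + (if m = 0 then 4 else 0))
    (by
      intro j
      simp only [wv]
      split_ifs <;> (try norm_num) <;> omega)]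
  rw [Finset.sum_add_distrib, Finset.sum_ite_eq', Finset.sum_ite_eq']
  simp [Finset.mem_range, hk, show 0 < N by omega]

lemma b0_normsq (s : ℕ) : ∑ j : Fin (2*3+2+s), (bval 0 (j:ℕ))^2 = 8 := by
  rw [fin_sum_eval _ _ (fun m => (bval 0 m)^2) (fun j => rfl),
    show 2*3+2+s = 8+s by norm_num,
    sum_trunc 8 s _ (by
      intro m hm
      have : bval 0 m = 0 := by unfold bval; split_ifs <;> first | omega | exact (‹False›).elim
      rw [this]; ring)]
  norm_num [Finset.sum_range_succ, bval]

lemma mem_prop (s : ℕ) (v : Fin (2*3+2+s) → ℤ) (hv : v ∈ hyperL 3 s) :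
    (∑ j, v j = 0) ∧ (∀ j : Fin (2*3+2+s), 8 ≤ (j:ℕ) → v j % 2 = 0) ∧
      (∀ j : Fin (2*3+2+s), (j:ℕ) ≤ 7 → v j % 2 = v ⟨0, by omega⟩ % 2) := by
  induction hv using Submodule.span_induction with
  | mem x hx =>
      rcases hx with hx | ⟨k, hk1, hk2, rfl⟩
      · rw [Set.mem_singleton_iff] at hx
        subst hx
        refine ⟨?_, ?_, ?_⟩
        · rw [fin_sum_eval (2*3+2+s) (uv 3 s)
            (fun m => if m = 0 then -(2*(3:ℤ)+1) else if m ≤ 2*3+1 then 1 else 0) (fun j => rfl),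
            show 2*3+2+s = 8+s by norm_num,
            sum_trunc 8 s _ (by intro m hm; split_ifs <;> first | omega | exact (‹False›).elim)]
          norm_num [Finset.sum_range_succ]
        · intro j hj
          simp only [uv]
          split_ifs <;> first | omega | exact (‹False›).elim
        · intro j hj
          simp only [uv]
          split_ifs <;> first | omega | exact (‹False›).elim
      · have hz : ∀ j : Fin (2*3+2+s), wv (2*3+2+s) k j % 2 = 0 := by
          intro j
          simp only [wv]
          split_ifs <;> first | omega | exact (‹False›).elim
        refine ⟨?_, fun j _ => hz j, fun j _ => by rw [hz j, hz _]⟩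
        rw [fin_sum_eval (2*3+2+s) (wv (2*3+2+s) k)
          (fun m => (if m = k then (2:ℤ) else 0) + (if m = 0 then -2 else 0)) (fun j => rfl),
          Finset.sum_add_distrib, Finset.sum_ite_eq', Finset.sum_ite_eq']
        have hkmem : k ∈ Finset.range (2*3+2+s) := Finset.mem_range.mpr (by omega)
        have h0mem : (0:ℕ) ∈ Finset.range (2*3+2+s) := Finset.mem_range.mpr (by omega)
        rw [if_pos hkmem, if_pos h0mem]
        ring
  | zero => simp
  | add x y hx hy ihx ihy =>
      obtain ⟨hx1, hx2, hx3⟩ := ihx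
      obtain ⟨hy1, hy2, hy3⟩ := ihy
      refine ⟨?_, ?_, ?_⟩
      · simp only [Pi.add_apply]
        rw [Finset.sum_add_distrib, hx1, hy1, add_zero]
      · intro j hj
        have := hx2 j hj; have := hy2 j hj
        simp only [Pi.add_apply]
        omega
      · intro j hj
        have := hx3 j hj; have := hy3 j hj
        simp only [Pi.add_apply]
        omega
  | smul a x hx ih =>
      obtain ⟨h1, h2, h3⟩ := ih
      refine ⟨?_, ?_, ?_⟩
      · simp only [Pi.smul_apply, smul_eq_mul]
        rw [← Finset.mul_sum, h1, mul_zero]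
      · intro j hj
        simp only [Pi.smul_apply, smul_eq_mul]
        rw [Int.mul_emod, h2 j hj, mul_zero]
        rfl
      · intro j hj
        simp only [Pi.smul_apply, smul_eq_mul]
        rw [Int.mul_emod, Int.mul_emod a (x ⟨0, by omega⟩), h3 j hj]

lemma sq_ge_one (x : ℤ) (h : x % 2 = 1) : 1 ≤ x^2 := by
  have h0 : x ≠ 0 := by omega
  have h1 : (x^2 : ℤ) ≠ 0 := pow_ne_zero 2 h0
  have h2 : 0 ≤ x^2 := sq_nonneg x
  omega

lemma sq_ge_four (x : ℤ) (h : x % 2 = 0) (h0 : x ≠ 0) : 4 ≤ x^2 := by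
  have : x ≤ -2 ∨ 2 ≤ x := by omega
  rcases this with h | h <;> nlinarith

lemma min_bound (s : ℕ) (v : Fin (2*3+2+s) → ℤ)
    (h1 : ∑ j, v j = 0) (h2 : ∀ j : Fin (2*3+2+s), 8 ≤ (j:ℕ) → v j % 2 = 0)
    (h3 : ∀ j : Fin (2*3+2+s), (j:ℕ) ≤ 7 → v j % 2 = v ⟨0, by omega⟩ % 2)
    (hne : v ≠ 0) : 8 ≤ ∑ j, (v j)^2 := by
  have hle : 8 ≤ 2*3+2+s := by omega
  rcases Int.emod_two_eq_zero_or_one (v ⟨0, by omega⟩) with hz | hz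
  · -- all coordinates even; two nonzero coordinates
    have heven : ∀ j : Fin (2*3+2+s), v j % 2 = 0 := by
      intro j
      by_cases hj : (j:ℕ) ≤ 7
      · rw [h3 j hj, hz]
      · exact h2 j (by omega)
    obtain ⟨j0, hj0⟩ := Function.ne_iff.mp hne
    have hj0' : v j0 ≠ 0 := by simpa using hj0
    have : ∃ j1, j1 ≠ j0 ∧ v j1 ≠ 0 := by
      by_contra hc
      push_neg at hc
      have hs : ∑ j, v j = v j0 :=
        Finset.sum_eq_single j0 (fun b _ hb => hc b hb) (fun h => absurd (Finset.mem_univ _) h)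
      rw [h1] at hs
      exact hj0' hs.symm
    obtain ⟨j1, hj1ne, hj1⟩ := this
    have key : (8:ℤ) ≤ ∑ j ∈ ({j1, j0} : Finset (Fin (2*3+2+s))), (v j)^2 := by
      rw [Finset.sum_pair hj1ne]
      have := sq_ge_four (v j0) (heven j0) hj0'
      have := sq_ge_four (v j1) (heven j1) hj1
      omega
    refine le_trans key (Finset.sum_le_sum_of_subset_of_nonneg (Finset.subset_univ _) ?_)
    intro j _ _
    exact sq_nonneg _
  · -- all ramified coordinates odd
    set S : Finset (Fin (2*3+2+s)) :=
      (Finset.univ : Finset (Fin 8)).image (Fin.castLE hle) with hS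
    have hcard : ∑ j ∈ S, (v j)^2 = ∑ i : Fin 8, (v (Fin.castLE hle i))^2 :=
      Finset.sum_image (fun a _ b _ hab => Fin.castLE_injective hle hab)
    have key : (8:ℤ) ≤ ∑ j ∈ S, (v j)^2 := by
      rw [hcard]
      have : ∀ i : Fin 8, 1 ≤ (v (Fin.castLE hle i))^2 := by
        intro i
        apply sq_ge_one
        rw [h3 _ (by simpa using Nat.lt_succ_iff.mp i.isLt), hz]
      calc (8:ℤ) = ∑ _i : Fin 8, 1 := by simp
        _ ≤ _ := Finset.sum_le_sum (fun i _ => this i)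
    refine le_trans key (Finset.sum_le_sum_of_subset_of_nonneg (Finset.subset_univ _) ?_)
    intro j _ _
    exact sq_nonneg _

lemma B_indep (s : ℕ) : LinearIndependent ℤ (fun i : Fin (7+s) => Bfun s (i:ℕ)) := by
  rw [Fintype.linearIndependent_iff]
  intro c hc
  have key : ∀ m : ℕ, m < 2*3+2+s → ∑ i : Fin (7+s), c i * bval (i:ℕ) m = 0 := by
    intro m hm
    have h := congrFun hc ⟨m, hm⟩
    simp only [Finset.sum_apply, Pi.smul_apply, smul_eq_mul, Bfun_apply, Pi.zero_apply] at h
    exact h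
  have hc0 : c ⟨0, by omega⟩ = 0 := by
    have h7 := key 7 (by omega)
    rw [Finset.sum_eq_single (⟨0, by omega⟩ : Fin (7+s))] at h7
    · simpa [bval] using h7
    · intro b _ hb
      have hb0 : (b:ℕ) ≠ 0 := fun h => hb (Fin.ext h)
      have hz : bval (b:ℕ) 7 = 0 := by unfold bval; split_ifs <;> first | omega | exact (‹False›).elim
      rw [hz, mul_zero]
    · intro h; exact absurd (Finset.mem_univ _) h
  intro i
  by_cases hi0 : (i:ℕ) = 0
  · rw [show i = ⟨0, by omega⟩ from Fin.ext hi0]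
    exact hc0
  by_cases hi6 : (i:ℕ) ≤ 6
  · have h := key (i:ℕ) (by omega)
    rw [Finset.sum_eq_single i] at h
    · have hz : bval (i:ℕ) (i:ℕ) = 2 := by unfold bval; split_ifs <;> first | omega | exact (‹False›).elim
      rw [hz] at h
      omega
    · intro b _ hb
      by_cases hb0 : (b:ℕ) = 0
      · rw [show b = ⟨0, by omega⟩ from Fin.ext hb0, hc0, zero_mul]
      · have hbne : (b:ℕ) ≠ (i:ℕ) := fun h' => hb (Fin.ext h')
        have hz : bval (b:ℕ) (i:ℕ) = 0 := by unfold bval; split_ifs <;> first | omega | exact (‹False›).elim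
        rw [hz, mul_zero]
    · intro h; exact absurd (Finset.mem_univ _) h
  · have h := key ((i:ℕ)+1) (by omega)
    rw [Finset.sum_eq_single i] at h
    · have hz : bval (i:ℕ) ((i:ℕ)+1) = 2 := by unfold bval; split_ifs <;> first | omega | exact (‹False›).elim
      rw [hz] at h
      omega
    · intro b _ hb
      have hbne : (b:ℕ) ≠ (i:ℕ) := fun h' => hb (Fin.ext h')
      have hz : bval (b:ℕ) ((i:ℕ)+1) = 0 := by unfold bval; split_ifs <;> first | omega | exact (‹False›).elim
      rw [hz, mul_zero]
    · intro h; exact absurd (Finset.mem_univ _) h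

lemma u_eq (s : ℕ) : uv 3 s = Bfun s 0 + Bfun s 1 + Bfun s 2 + Bfun s 3 := by
  have h0 : Bfun s 0 = uv 3 s - wv (2*3+2+s) 1 - wv (2*3+2+s) 2 - wv (2*3+2+s) 3 := by
    unfold Bfun; norm_num
  have h1 : Bfun s 1 = wv (2*3+2+s) 1 := by unfold Bfun; norm_num
  have h2 : Bfun s 2 = wv (2*3+2+s) 2 := by unfold Bfun; norm_num
  have h3 : Bfun s 3 = wv (2*3+2+s) 3 := by unfold Bfun; norm_num
  rw [h0, h1, h2, h3]
  abel

lemma two_u (s : ℕ) : (2:ℤ) • uv 3 s =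
    wv (2*3+2+s) 1 + wv (2*3+2+s) 2 + wv (2*3+2+s) 3 + wv (2*3+2+s) 4 +
      wv (2*3+2+s) 5 + wv (2*3+2+s) 6 + wv (2*3+2+s) 7 := by
  funext j
  simp only [Pi.add_apply, Pi.smul_apply, smul_eq_mul, uv, wv]
  split_ifs <;> first | omega | exact (‹False›).elim

lemma B_span (s : ℕ) :
    Submodule.span ℤ (Set.range (fun i : Fin (7+s) => Bfun s (i:ℕ))) = hyperL 3 s := by
  have wgen : ∀ k : ℕ, 1 ≤ k → k ≤ 2*3+1+s → wv (2*3+2+s) k ∈ hyperL 3 s := fun k h1 h2 =>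
    Submodule.subset_span (Set.mem_union_right _ ⟨k, h1, h2, rfl⟩)
  have ugen : uv 3 s ∈ hyperL 3 s := Submodule.subset_span (Set.mem_union_left _ rfl)
  apply le_antisymm
  · rw [Submodule.span_le]
    rintro _ ⟨i, rfl⟩
    simp only [SetLike.mem_coe]
    by_cases hi0 : (i:ℕ) = 0
    · rw [show Bfun s (i:ℕ) = uv 3 s - wv (2*3+2+s) 1 - wv (2*3+2+s) 2 - wv (2*3+2+s) 3 by
        rw [hi0]; unfold Bfun; norm_num]
      exact sub_mem (sub_mem (sub_mem ugen (wgen 1 (by omega) (by omega)))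
        (wgen 2 (by omega) (by omega))) (wgen 3 (by omega) (by omega))
    by_cases hi6 : (i:ℕ) ≤ 6
    · rw [show Bfun s (i:ℕ) = wv (2*3+2+s) (i:ℕ) by unfold Bfun; rw [if_neg hi0, if_pos hi6]]
      exact wgen _ (by omega) (by omega)
    · rw [show Bfun s (i:ℕ) = wv (2*3+2+s) ((i:ℕ)+1) by unfold Bfun; rw [if_neg hi0, if_neg hi6]]
      exact wgen _ (by omega) (by omega)
  · rw [hyperL, Submodule.span_le]
    have Bmem : ∀ m : ℕ, (hm : m < 7+s) →
        Bfun s m ∈ Submodule.span ℤ (Set.range (fun i : Fin (7+s) => Bfun s (i:ℕ))) :=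
      fun m hm => Submodule.subset_span ⟨⟨m, hm⟩, rfl⟩
    have humem : uv 3 s ∈ Submodule.span ℤ (Set.range (fun i : Fin (7+s) => Bfun s (i:ℕ))) := by
      rw [u_eq s]
      exact add_mem (add_mem (add_mem (Bmem 0 (by omega)) (Bmem 1 (by omega)))
        (Bmem 2 (by omega))) (Bmem 3 (by omega))
    rintro x (hx | ⟨k, hk1, hk2, rfl⟩)
    · rw [Set.mem_singleton_iff] at hx
      subst hx
      exact humem
    simp only [SetLike.mem_coe]
    by_cases hk6 : k ≤ 6
    · rw [show wv (2*3+2+s) k = Bfun s k by unfold Bfun; rw [if_neg (by omega), if_pos hk6]]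
      exact Bmem k (by omega)
    by_cases hk7 : k = 7
    · subst hk7
      have h7 : wv (2*3+2+s) 7 = (2:ℤ) • uv 3 s - wv (2*3+2+s) 1 - wv (2*3+2+s) 2 -
          wv (2*3+2+s) 3 - wv (2*3+2+s) 4 - wv (2*3+2+s) 5 - wv (2*3+2+s) 6 := by
        rw [two_u s]; abel
      rw [h7]
      have hw : ∀ k : ℕ, 1 ≤ k → k ≤ 6 →
          wv (2*3+2+s) k ∈ Submodule.span ℤ (Set.range (fun i : Fin (7+s) => Bfun s (i:ℕ))) := by
        intro k h1 h2
        rw [show wv (2*3+2+s) k = Bfun s k by unfold Bfun; rw [if_neg (by omega), if_pos h2]]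
        exact Bmem k (by omega)
      exact sub_mem (sub_mem (sub_mem (sub_mem (sub_mem (sub_mem
        (Submodule.smul_mem _ 2 humem)
        (hw 1 (by omega) (by omega))) (hw 2 (by omega) (by omega)))
        (hw 3 (by omega) (by omega))) (hw 4 (by omega) (by omega)))
        (hw 5 (by omega) (by omega))) (hw 6 (by omega) (by omega))
    · rw [show wv (2*3+2+s) k = Bfun s (k-1) by
        unfold Bfun; rw [if_neg (by omega), if_neg (by omega), show k-1+1 = k by omega]]
      exact Bmem (k-1) (by omega)

/-- For `g = 3` and any `s ≥ 0`, the lattice `L(3,s)` has a basis of minimal vectors: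
every nonzero `v ∈ L(3,s)` has squared Euclidean norm at least `8`, and the `7+s` vectors
`u - w₁ - w₂ - w₃, w₁, …, w₆, w₈, …, w_{7+s}`, all of squared norm exactly `8`,
form a ℤ-basis of `L(3,s)`. -/
theorem stmt0 (s : ℕ) :
    (∀ v ∈ hyperL 3 s, v ≠ 0 → 8 ≤ ∑ j, (v j)^2) ∧
    (∃ b : Module.Basis (Fin (7+s)) ℤ (hyperL 3 s),
      (∀ i : Fin (7+s), ((b i : Fin (2*3+2+s) → ℤ)) =
        if (i : ℕ) = 0 then
          uv 3 s - wv (2*3+2+s) 1 - wv (2*3+2+s) 2 - wv (2*3+2+s) 3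
        else if (i : ℕ) ≤ 6 then wv (2*3+2+s) (i : ℕ)
        else wv (2*3+2+s) ((i : ℕ) + 1)) ∧
      (∀ i : Fin (7+s), ∑ j, ((b i : Fin (2*3+2+s) → ℤ) j)^2 = 8)) := by
  constructor
  · intro v hv hne
    obtain ⟨h1, h2, h3⟩ := mem_prop s v hv
    exact min_bound s v h1 h2 h3 hne
  · have hli := B_indep s
    have hcoe : ∀ i : Fin (7+s),
        ((((Module.Basis.span hli).map (LinearEquiv.ofEq _ _ (B_span s))) i : Fin (2*3+2+s) → ℤ)) =
          Bfun s (i:ℕ) := by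
      intro i
      rw [Module.Basis.map_apply, LinearEquiv.coe_ofEq_apply, Module.Basis.span_apply]
    refine ⟨(Module.Basis.span hli).map (LinearEquiv.ofEq _ _ (B_span s)), ?_, ?_⟩
    · intro i
      rw [hcoe i]
      rfl
    · intro i
      simp only [hcoe]
      by_cases hi0 : (i:ℕ) = 0
      · have hb : ∀ j : Fin (2*3+2+s), (Bfun s (i:ℕ) j)^2 = (bval 0 (j:ℕ))^2 := fun j => by
          rw [hi0, Bfun_apply]
        rw [Finset.sum_congr rfl fun j _ => hb j]
        exact b0_normsq s
      · by_cases hi6 : (i:ℕ) ≤ 6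
        · rw [show Bfun s (i:ℕ) = wv (2*3+2+s) (i:ℕ) by unfold Bfun; rw [if_neg hi0, if_pos hi6]]
          exact wv_normsq _ _ hi0 (by omega)
        · rw [show Bfun s (i:ℕ) = wv (2*3+2+s) ((i:ℕ)+1) by unfold Bfun; rw [if_neg hi0, if_neg hi6]]
          exact wv_normsq _ _ (by omega) (by have := i.isLt; omega)
end

section
/- For every integer g > 3 and any integer s ≥ 0, the lattice L(g,s) is well-rounded: every nonzero v ∈ L(g,s) has squared Euclidean norm at least 8, and the n = 2g+1+s vectors w_1, …, w_n, each of squared norm 8, are linearly independent over ℝ. -/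
lemma sum_ind (N k : ℕ) (hk : k < N) (c : ℤ) :
    (∑ j : Fin N, if (j : ℕ) = k then c else 0) = c := by
  have h : ∀ j : Fin N, ((j : ℕ) = k) = (j = ⟨k, hk⟩) := fun j =>
    propext ⟨fun h => Fin.ext h, fun h => h ▸ rfl⟩
  simp_rw [h]
  simp

lemma sum_ram (g s : ℕ) :
    (∑ j : Fin (2*g+2+s), if (j : ℕ) ≤ 2*g+1 then (1:ℤ) else 0) = 2*(g:ℤ)+2 := by
  rw [Fin.sum_univ_eq_sum_range (fun i => if i ≤ 2*g+1 then (1:ℤ) else 0)]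
  rw [← Finset.sum_subset (Finset.range_subset_range.mpr (by omega : 2*g+2 ≤ 2*g+2+s))
    (fun x _ hx => by rw [Finset.mem_range, not_lt] at hx; rw [if_neg (by omega)])]
  have hone : ∀ x ∈ Finset.range (2*g+2), (if x ≤ 2*g+1 then (1:ℤ) else 0) = 1 := by
    intro x hx
    rw [Finset.mem_range] at hx
    rw [if_pos (by omega)]
  rw [Finset.sum_congr rfl hone, Finset.sum_const, Finset.card_range]
  ring

lemma memP (g s : ℕ) (v : Fin (2*g+2+s) → ℤ) (hv : v ∈ hyperL g s) :
    (∑ j, v j = 0) ∧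
    (∀ j j' : Fin (2*g+2+s), (j : ℕ) ≤ 2*g+1 → (j' : ℕ) ≤ 2*g+1 → (2:ℤ) ∣ (v j - v j')) ∧
    (∀ j : Fin (2*g+2+s), 2*g+1 < (j : ℕ) → (2:ℤ) ∣ v j) := by
  induction hv using Submodule.span_induction with
  | mem x hx =>
    rcases hx with hx | ⟨k, hk1, hk2, rfl⟩
    · simp only [Set.mem_singleton_iff] at hx
      subst hx
      refine ⟨?_, ?_, ?_⟩
      · have key : ∀ j : Fin (2*g+2+s), uv g s j =
            (if (j : ℕ) ≤ 2*g+1 then (1:ℤ) else 0) +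
            (if (j : ℕ) = 0 then -(2*(g:ℤ)+2) else 0) := by
          intro j
          simp only [uv]
          by_cases hj0 : (j : ℕ) = 0
          · rw [if_pos hj0, if_pos (by omega), if_pos hj0]; ring
          · rw [if_neg hj0, if_neg hj0, add_zero]
        rw [Finset.sum_congr rfl (fun j _ => key j), Finset.sum_add_distrib, sum_ram,
          sum_ind _ 0 (by omega)]
        ring
      · have hoddval : ∀ j : Fin (2*g+2+s), (j : ℕ) ≤ 2*g+1 →
            ∃ m : ℤ, uv g s j = 2*m + 1 := by
          intro j hj
          simp only [uv]
          by_cases hj0 : (j : ℕ) = 0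
          · rw [if_pos hj0]; exact ⟨-(g:ℤ)-1, by ring⟩
          · rw [if_neg hj0, if_pos hj]; exact ⟨0, by ring⟩
        intro j j' hj hj'
        obtain ⟨m, hm⟩ := hoddval j hj
        obtain ⟨m', hm'⟩ := hoddval j' hj'
        rw [hm, hm']
        exact ⟨m - m', by ring⟩
      · intro j hj
        simp only [uv]
        rw [if_neg (by omega), if_neg (by omega)]
        exact ⟨0, rfl⟩
    · refine ⟨?_, ?_, ?_⟩
      · simp only [wv]
        rw [Finset.sum_add_distrib, sum_ind _ k (by omega), sum_ind _ 0 (by omega)]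
        ring
      · intro j j' hj hj'
        simp only [wv]
        split_ifs <;> omega
      · intro j hj
        simp only [wv]
        split_ifs <;> omega
  | zero => exact ⟨by simp, fun j j' _ _ => by simp, fun j _ => by simp⟩
  | add x y hx hy ihx ihy =>
    obtain ⟨s1, p1, q1⟩ := ihx
    obtain ⟨s2, p2, q2⟩ := ihy
    refine ⟨?_, fun j j' hj hj' => ?_, fun j hj => ?_⟩
    · simp only [Pi.add_apply, Finset.sum_add_distrib, s1, s2, add_zero]
    · have := p1 j j' hj hj'; have := p2 j j' hj hj'; simp only [Pi.add_apply]; omega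
    · have := q1 j hj; have := q2 j hj; simp only [Pi.add_apply]; omega
  | smul a x hx ihx =>
    obtain ⟨s1, p1, q1⟩ := ihx
    refine ⟨?_, fun j j' hj hj' => ?_, fun j hj => ?_⟩
    · simp only [Pi.smul_apply, smul_eq_mul, ← Finset.mul_sum, s1, mul_zero]
    · simp only [Pi.smul_apply, smul_eq_mul]
      have h := (p1 j j' hj hj').mul_left a
      rw [mul_sub] at h
      exact h
    · simp only [Pi.smul_apply, smul_eq_mul]
      exact (q1 j hj).mul_left a

/-- For every integer `g > 3` and any `s ≥ 0`, the lattice `L(g,s)` is well-rounded: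
every nonzero `v ∈ L(g,s)` has squared Euclidean norm at least `8`, and the
`n = 2g+1+s` vectors `w₁, …, w_n`, each of squared norm `8` and each lying in `L(g,s)`,
are linearly independent over `ℝ`. -/
theorem stmt1 (g s : ℕ) (hg : 3 < g) :
    (∀ v ∈ hyperL g s, v ≠ 0 → 8 ≤ ∑ j, (v j)^2) ∧
    (∀ i : Fin (2*g+1+s), wv (2*g+2+s) ((i : ℕ) + 1) ∈ hyperL g s) ∧
    (∀ i : Fin (2*g+1+s), ∑ j, (wv (2*g+2+s) ((i : ℕ) + 1) j)^2 = 8) ∧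
    LinearIndependent ℝ
      (fun (i : Fin (2*g+1+s)) (j : Fin (2*g+2+s)) =>
        ((wv (2*g+2+s) ((i : ℕ) + 1) j : ℤ) : ℝ)) := by
  refine ⟨?_, ?_, ?_, ?_⟩
  · -- minimum norm
    intro v hv hne
    obtain ⟨hsum, hram, hin⟩ := memP g s v hv
    set z : Fin (2*g+2+s) := ⟨0, by omega⟩ with hz
    have hzle : (z : ℕ) ≤ 2*g+1 := by simp [hz]
    by_cases hpar : (2:ℤ) ∣ v z
    · -- all coordinates even
      have heven : ∀ j : Fin (2*g+2+s), (2:ℤ) ∣ v j := by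
        intro j
        by_cases hj : (j : ℕ) ≤ 2*g+1
        · have := hram j z hj hzle; omega
        · exact hin j (by omega)
      obtain ⟨j0, hj0⟩ := Function.ne_iff.mp hne
      have hj0' : v j0 ≠ 0 := hj0
      have hex : ∃ j1, j1 ≠ j0 ∧ v j1 ≠ 0 := by
        by_contra h
        push_neg at h
        have : ∑ j, v j = v j0 := Finset.sum_eq_single j0
          (fun b _ hb => h b hb) (fun h' => absurd (Finset.mem_univ j0) h')
        rw [hsum] at this
        exact hj0' this.symm
      obtain ⟨j1, hj1ne, hj1⟩ := hex
      have hb0 : 4 ≤ (v j0)^2 := by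
        have h2 := heven j0
        have : v j0 ≤ -2 ∨ 2 ≤ v j0 := by omega
        rcases this with h | h <;> nlinarith
      have hb1 : 4 ≤ (v j1)^2 := by
        have h2 := heven j1
        have : v j1 ≤ -2 ∨ 2 ≤ v j1 := by omega
        rcases this with h | h <;> nlinarith
      have hsub := Finset.sum_le_sum_of_subset_of_nonneg
        (Finset.subset_univ ({j0, j1} : Finset (Fin (2*g+2+s))))
        (fun j _ _ => sq_nonneg (v j))
      rw [Finset.sum_pair (fun h => hj1ne h.symm : j0 ≠ j1)] at hsub
      linarith
    · -- all ramified coordinates odd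
      have hodd : ∀ j : Fin (2*g+2+s), (j : ℕ) ≤ 2*g+1 → 1 ≤ (v j)^2 := by
        intro j hj
        have := hram j z hj hzle
        have : v j ≤ -1 ∨ 1 ≤ v j := by omega
        rcases this with h | h <;> nlinarith
      have hle : (∑ j : Fin (2*g+2+s), if (j : ℕ) ≤ 2*g+1 then (1:ℤ) else 0)
          ≤ ∑ j, (v j)^2 := by
        apply Finset.sum_le_sum
        intro j _
        split_ifs with h
        · exact hodd j h
        · exact sq_nonneg _
      rw [sum_ram] at hle
      have : (4:ℤ) ≤ (g:ℤ) := by exact_mod_cast hg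
      linarith
  · -- membership
    intro i
    apply Submodule.subset_span
    right
    exact ⟨(i : ℕ) + 1, by omega, by omega, rfl⟩
  · -- norm of generators
    intro i
    have h1 : (i : ℕ) + 1 < 2*g+2+s := by omega
    have key : ∀ j : Fin (2*g+2+s), (wv (2*g+2+s) ((i : ℕ) + 1) j)^2 =
        (if (j : ℕ) = (i : ℕ) + 1 then (4:ℤ) else 0) + (if (j : ℕ) = 0 then 4 else 0) := by
      intro j
      simp only [wv]
      by_cases h : (j : ℕ) = (i : ℕ) + 1
      · rw [if_pos h, if_pos h, if_neg (by omega), if_neg (by omega)]; ring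
      · by_cases h0 : (j : ℕ) = 0
        · rw [if_neg h, if_pos h0, if_neg h, if_pos h0]; ring
        · rw [if_neg h, if_neg h0, if_neg h, if_neg h0]; ring
    rw [Finset.sum_congr rfl (fun j _ => key j), Finset.sum_add_distrib,
      sum_ind _ _ h1, sum_ind _ 0 (by omega)]
    ring
  · -- linear independence
    rw [Fintype.linearIndependent_iff]
    intro c hc i0
    have h1 : (i0 : ℕ) + 1 < 2*g+2+s := by omega
    have h := congrFun hc (⟨(i0 : ℕ) + 1, h1⟩ : Fin (2*g+2+s))
    simp only [Finset.sum_apply, Pi.smul_apply, Pi.zero_apply, smul_eq_mul, wv] at h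
    have hsimp : ∀ i : Fin (2*g+1+s),
        c i * (((if ((⟨(i0 : ℕ) + 1, h1⟩ : Fin (2*g+2+s)) : ℕ) = (i : ℕ) + 1 then (2:ℤ) else 0) +
          (if ((⟨(i0 : ℕ) + 1, h1⟩ : Fin (2*g+2+s)) : ℕ) = 0 then -2 else 0) : ℤ) : ℝ) =
        if i = i0 then 2 * c i else 0 := by
      intro i
      have hv0 : ((⟨(i0 : ℕ) + 1, h1⟩ : Fin (2*g+2+s)) : ℕ) = (i0 : ℕ) + 1 := rfl
      rw [hv0, if_neg (by omega : ¬ (i0 : ℕ) + 1 = 0), add_zero]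
      by_cases hii : i = i0
      · subst hii
        rw [if_pos rfl, if_pos rfl]
        push_cast
        ring
      · rw [if_neg (fun hcon => hii (Fin.ext (by omega))), if_neg hii]
        push_cast
        ring
    rw [Finset.sum_congr rfl (fun i _ => hsimp i), Finset.sum_ite_eq' Finset.univ i0
      (fun i => 2 * c i), if_pos (Finset.mem_univ _)] at h
    linarith
end

section
/- For g = 2 and any integer s ≥ 1, the lattice L(2,s) is not well-rounded: the minimum squared Euclidean norm of a nonzero vector of L(2,s) equals 6, but any linearly independent family of vectors of L(2,s) each of squared norm 6 has at most 5 elements, whereas L(2,s) has rank 5+s ≥ 6. -/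
/- ### Auxiliary material -/

private lemma sq_one_of_ne {a : ℤ} (h : a ≠ 0) : 1 ≤ a^2 := by
  rcases h.lt_or_gt with h | h <;> nlinarith

private lemma sq_four_of_even {a : ℤ} (h2 : (2:ℤ) ∣ a) (h : a ≠ 0) : 4 ≤ a^2 := by
  obtain ⟨b, rfl⟩ := h2
  have hb : b ≠ 0 := by rintro rfl; simp at h
  have := sq_one_of_ne hb
  nlinarith

/-- embedding of the six ramified coordinates -/
private def emb (s : ℕ) : Fin 6 ↪ Fin (2*2+2+s) :=
  ⟨fun i => ⟨(i : ℕ), by omega⟩, by intro a b h; simpa [Fin.ext_iff] using h⟩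

private def Tset (s : ℕ) : Finset (Fin (2*2+2+s)) := Finset.univ.map (emb s)

private lemma mem_Tset {s : ℕ} (j : Fin (2*2+2+s)) : j ∈ Tset s ↔ (j : ℕ) ≤ 5 := by
  simp only [Tset, Finset.mem_map, Finset.mem_univ, true_and, emb,
    Function.Embedding.coeFn_mk, Fin.ext_iff]
  constructor
  · rintro ⟨i, hi⟩; have hi' : (i : ℕ) = j := hi; have := i.isLt; omega
  · intro h; exact ⟨⟨(j : ℕ), by omega⟩, rfl⟩

private lemma card_Tset (s : ℕ) : (Tset s).card = 6 := by
  simp [Tset]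

private lemma sum_Tset {s : ℕ} (f : Fin (2*2+2+s) → ℤ) :
    ∑ j ∈ Tset s, f j =
      f ⟨0, by omega⟩ + f ⟨1, by omega⟩ + f ⟨2, by omega⟩ + f ⟨3, by omega⟩
        + f ⟨4, by omega⟩ + f ⟨5, by omega⟩ := by
  simp only [Tset, Finset.sum_map, Fin.sum_univ_six, emb, Function.Embedding.coeFn_mk]
  rfl

private lemma sum_eq_sum_Tset {s : ℕ} (f : Fin (2*2+2+s) → ℤ)
    (h : ∀ j : Fin (2*2+2+s), 6 ≤ (j : ℕ) → f j = 0) :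
    ∑ j, f j = ∑ j ∈ Tset s, f j := by
  symm
  apply Finset.sum_subset (Finset.subset_univ _)
  intro j _ hj
  exact h j (by rw [mem_Tset] at hj; omega)

/-- Basic structure of elements of the lattice: coordinates sum to zero, the six
ramified coordinates share a common parity, and inert coordinates are even. -/
private lemma memL {s : ℕ} {v : Fin (2*2+2+s) → ℤ} (hv : v ∈ hyperL 2 s) :
    (∑ j, v j = 0) ∧
    (∀ j : Fin (2*2+2+s), (j : ℕ) ≤ 5 →
        ((v j : ZMod 2) = (v ⟨0, by omega⟩ : ZMod 2))) ∧
    (∀ j : Fin (2*2+2+s), 6 ≤ (j : ℕ) → ((v j : ZMod 2) = 0)) := by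
  induction hv using Submodule.span_induction with
  | mem x hx =>
    rcases hx with hx | ⟨k, hk1, hk2, rfl⟩
    · rcases hx with rfl
      refine ⟨?_, ?_, ?_⟩
      · rw [sum_eq_sum_Tset _ (fun j hj => by
          simp only [uv]
          rw [if_neg (by omega), if_neg (by omega)]), sum_Tset]
        simp [uv]
      · intro j hj
        by_cases h0 : (j : ℕ) = 0
        · have : j = ⟨0, by omega⟩ := Fin.ext h0
          rw [this]
        · have e0 : uv 2 s (⟨0, by omega⟩ : Fin (2*2+2+s)) = -5 := by norm_num [uv]
          have e1 : uv 2 s j = 1 := by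
            simp only [uv]; rw [if_neg h0, if_pos (by omega)]
          rw [e0, e1, ZMod.intCast_eq_intCast_iff]
          decide
      · intro j hj
        simp only [uv]
        rw [if_neg (by omega), if_neg (by omega)]
        simp
    · have hwv : ∀ j : Fin (2*2+2+s), ((wv (2*2+2+s) k j : ZMod 2) = 0) := by
        intro j
        have hd : (2:ℤ) ∣ wv (2*2+2+s) k j := by
          simp only [wv]; split_ifs <;> decide
        exact (ZMod.intCast_zmod_eq_zero_iff_dvd _ 2).2 hd
      refine ⟨?_, fun j _ => by rw [hwv, hwv], fun j _ => hwv j⟩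
      have hkN : k < 2*2+2+s := by omega
      have h1 : ∀ j : Fin (2*2+2+s), ((j:ℕ) = k) ↔ (j = ⟨k, hkN⟩) := by
        intro j; rw [Fin.ext_iff]
      have h2 : ∀ j : Fin (2*2+2+s), ((j:ℕ) = 0) ↔ (j = ⟨0, by omega⟩) := by
        intro j; rw [Fin.ext_iff]
      simp only [wv, Finset.sum_add_distrib, h1, h2, Finset.sum_ite_eq',
        Finset.mem_univ, if_pos]
      ring
  | zero => refine ⟨by simp, by simp, by simp⟩
  | add x y hx hy ihx ihy =>
    obtain ⟨sx, px, qx⟩ := ihx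
    obtain ⟨sy, py, qy⟩ := ihy
    refine ⟨?_, ?_, ?_⟩
    · simp only [Pi.add_apply, Finset.sum_add_distrib, sx, sy, add_zero]
    · intro j hj; push_cast [Pi.add_apply]; rw [px j hj, py j hj]
    · intro j hj; push_cast [Pi.add_apply]; rw [qx j hj, qy j hj]; ring
  | smul a x hx ih =>
    obtain ⟨sx, px, qx⟩ := ih
    refine ⟨?_, ?_, ?_⟩
    · simp only [Pi.smul_apply, smul_eq_mul, ← Finset.mul_sum, sx, mul_zero]
    · intro j hj; push_cast [Pi.smul_apply, smul_eq_mul]; rw [px j hj]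
    · intro j hj; push_cast [Pi.smul_apply, smul_eq_mul]; rw [qx j hj]; ring

/-- Parity dichotomy for lattice vectors. -/
private lemma parity_cases {s : ℕ} {v : Fin (2*2+2+s) → ℤ} (hv : v ∈ hyperL 2 s) :
    (∀ j : Fin (2*2+2+s), (j : ℕ) ≤ 5 → v j ≠ 0) ∨ (∀ j, (2:ℤ) ∣ v j) := by
  obtain ⟨-, h1, h2⟩ := memL hv
  by_cases h : (v ⟨0, by omega⟩ : ZMod 2) = 0
  · right; intro j
    rcases le_or_gt (j : ℕ) 5 with hj | hj
    · have := h1 j hj; rw [h] at this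
      exact (ZMod.intCast_zmod_eq_zero_iff_dvd _ 2).1 this
    · exact (ZMod.intCast_zmod_eq_zero_iff_dvd _ 2).1 (h2 j (by omega))
  · left; intro j hj h0
    apply h
    rw [← h1 j hj, h0]
    simp

private lemma sum_T_ge {s : ℕ} {v : Fin (2*2+2+s) → ℤ}
    (hodd : ∀ j : Fin (2*2+2+s), (j : ℕ) ≤ 5 → v j ≠ 0) :
    6 ≤ ∑ j ∈ Tset s, (v j)^2 := by
  calc (6 : ℤ) = ∑ _j ∈ Tset s, (1:ℤ) := by rw [Finset.sum_const, card_Tset]; ring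
  _ ≤ ∑ j ∈ Tset s, (v j)^2 := by
      apply Finset.sum_le_sum
      intro j hj
      exact sq_one_of_ne (hodd j ((mem_Tset j).1 hj))

private lemma sum_T_le {s : ℕ} (v : Fin (2*2+2+s) → ℤ) :
    ∑ j ∈ Tset s, (v j)^2 ≤ ∑ j, (v j)^2 :=
  Finset.sum_le_sum_of_subset_of_nonneg (Finset.subset_univ _)
    (fun j _ _ => sq_nonneg _)

/-- First claim: minimum squared norm is at least 6. -/
private lemma norm_low {s : ℕ} {v : Fin (2*2+2+s) → ℤ} (hv : v ∈ hyperL 2 s)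
    (h0 : v ≠ 0) : 6 ≤ ∑ j, (v j)^2 := by
  rcases parity_cases hv with hodd | heven
  · exact le_trans (sum_T_ge hodd) (sum_T_le v)
  · obtain ⟨j, hj⟩ := Function.ne_iff.1 h0
    simp only [Pi.zero_apply] at hj
    have hsum := (memL hv).1
    have hk : ∃ k, k ≠ j ∧ v k ≠ 0 := by
      by_contra hno
      push_neg at hno
      have : ∑ i, v i = v j := Finset.sum_eq_single j
        (fun k _ hkj => hno k hkj) (by simp)
      rw [hsum] at this
      exact hj this.symm
    obtain ⟨k, hkj, hk⟩ := hk
    have h8 : 8 ≤ (v j)^2 + (v k)^2 := by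
      have := sq_four_of_even (heven j) hj
      have := sq_four_of_even (heven k) hk
      linarith
    have hp : ∑ i ∈ ({j, k} : Finset _), (v i)^2 = (v j)^2 + (v k)^2 :=
      Finset.sum_pair (Ne.symm hkj)
    have hle : ∑ i ∈ ({j, k} : Finset _), (v i)^2 ≤ ∑ i, (v i)^2 :=
      Finset.sum_le_sum_of_subset_of_nonneg (Finset.subset_univ _)
        (fun i _ _ => sq_nonneg _)
    linarith

/-- Vectors of squared norm 6 vanish on inert coordinates. -/
private lemma min_structure {s : ℕ} {v : Fin (2*2+2+s) → ℤ} (hv : v ∈ hyperL 2 s)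
    (h6 : ∑ j, (v j)^2 = 6) :
    ∀ j : Fin (2*2+2+s), 6 ≤ (j : ℕ) → v j = 0 := by
  rcases parity_cases hv with hodd | heven
  · have hT := sum_T_ge hodd
    have hsd : ∑ j ∈ Finset.univ \ Tset s, (v j)^2
        + ∑ j ∈ Tset s, (v j)^2 = ∑ j, (v j)^2 :=
      Finset.sum_sdiff (Finset.subset_univ _)
    have hnn : 0 ≤ ∑ j ∈ Finset.univ \ Tset s, (v j)^2 :=
      Finset.sum_nonneg (fun j _ => sq_nonneg _)
    have hz : ∀ j ∈ Finset.univ \ Tset s, (v j)^2 = 0 := by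
      rw [← Finset.sum_eq_zero_iff_of_nonneg (fun j _ => sq_nonneg (v j))]
      linarith
    intro j hj
    have hjm : j ∈ Finset.univ \ Tset s := by
      simp [Finset.mem_sdiff, mem_Tset]; omega
    have := hz j hjm
    exact pow_eq_zero_iff (two_ne_zero).symm.symm |>.1 this
  · exfalso
    have h4 : (4:ℤ) ∣ ∑ j, (v j)^2 := by
      apply Finset.dvd_sum
      intro j _
      obtain ⟨b, hb⟩ := heven j
      exact ⟨b^2, by rw [hb]; ring⟩
    rw [h6] at h4
    norm_num at h4

/- ### The vector of norm 6 -/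

private def mv (s : ℕ) : Fin (2*2+2+s) → ℤ :=
  wv (2*2+2+s) 1 + wv (2*2+2+s) 2 + wv (2*2+2+s) 3 - uv 2 s

private lemma mv_mem (s : ℕ) : mv s ∈ hyperL 2 s := by
  have hw : ∀ k, 1 ≤ k → k ≤ 2*2+1+s → wv (2*2+2+s) k ∈ hyperL 2 s := fun k h1 h2 =>
    Submodule.subset_span (Or.inr ⟨k, h1, h2, rfl⟩)
  have hu : uv 2 s ∈ hyperL 2 s := Submodule.subset_span (Or.inl rfl)
  exact sub_mem (add_mem (add_mem (hw 1 (by omega) (by omega)) (hw 2 (by omega) (by omega)))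
    (hw 3 (by omega) (by omega))) hu

private lemma mv_apply {s : ℕ} (j : Fin (2*2+2+s)) :
    mv s j = if (j:ℕ) = 0 then -1 else if (j:ℕ) ≤ 3 then 1
      else if (j:ℕ) ≤ 5 then -1 else 0 := by
  simp only [mv, Pi.sub_apply, Pi.add_apply, wv, uv]
  rcases lt_or_ge (j : ℕ) 6 with h | h
  · have : (j:ℕ) = 0 ∨ (j:ℕ) = 1 ∨ (j:ℕ) = 2 ∨ (j:ℕ) = 3 ∨ (j:ℕ) = 4 ∨ (j:ℕ) = 5 := by
      omega
    rcases this with h | h | h | h | h | h <;> simp [h]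
  · have h0 : ¬(j:ℕ) = 0 := by omega
    have h1 : ¬(j:ℕ) = 1 := by omega
    have h2 : ¬(j:ℕ) = 2 := by omega
    have h3 : ¬(j:ℕ) = 3 := by omega
    have h35 : ¬(j:ℕ) ≤ 3 := by omega
    have h5 : ¬(j:ℕ) ≤ 5 := by omega
    simp [h0, h1, h2, h3, h35, h5]

private lemma mv_ne (s : ℕ) : mv s ≠ 0 := by
  intro h
  have := congrFun h ⟨0, by omega⟩
  rw [mv_apply] at this
  simp at this

private lemma mv_norm (s : ℕ) : ∑ j, (mv s j)^2 = 6 := by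
  have h : ∀ j : Fin (2*2+2+s), 6 ≤ (j:ℕ) → (mv s j)^2 = 0 := by
    intro j hj
    rw [mv_apply, if_neg (by omega), if_neg (by omega), if_neg (by omega)]
    ring
  rw [sum_eq_sum_Tset _ h, sum_Tset]
  simp only [mv_apply]
  norm_num

/- ### Linear independence bound -/

private def cvec (s : ℕ) (k : Fin 5) : Fin (2*2+2+s) → ℝ :=
  fun j => (if (j : ℕ) = (k : ℕ)+1 then 1 else 0) + (if (j : ℕ) = 0 then -1 else 0)

set_option maxHeartbeats 2000000 in
private lemma min_in_span {s : ℕ} {v : Fin (2*2+2+s) → ℤ} (hv : v ∈ hyperL 2 s)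
    (h6 : ∑ j, (v j)^2 = 6) :
    (fun j => ((v j : ℤ) : ℝ)) ∈ Submodule.span ℝ (Set.range (cvec s)) := by
  have hz := min_structure hv h6
  have hsum0 : v ⟨0, by omega⟩ + v ⟨1, by omega⟩ + v ⟨2, by omega⟩ + v ⟨3, by omega⟩
      + v ⟨4, by omega⟩ + v ⟨5, by omega⟩ = 0 := by
    rw [← sum_Tset, ← sum_eq_sum_Tset v hz, (memL hv).1]
  have heq : (fun j => ((v j : ℤ) : ℝ))
      = ∑ k : Fin 5, ((v ⟨(k : ℕ)+1, by omega⟩ : ℤ) : ℝ) • cvec s k := by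
    funext j
    simp only [Finset.sum_apply, Pi.smul_apply, smul_eq_mul, Fin.sum_univ_five, cvec,
      show ((0:Fin 5):ℕ) = 0 from rfl, show ((1:Fin 5):ℕ) = 1 from rfl,
      show ((2:Fin 5):ℕ) = 2 from rfl, show ((3:Fin 5):ℕ) = 3 from rfl,
      show ((4:Fin 5):ℕ) = 4 from rfl, Nat.reduceAdd]
    rcases lt_or_ge (j : ℕ) 6 with h | h
    · have hval : (j:ℕ) = 0 ∨ (j:ℕ) = 1 ∨ (j:ℕ) = 2 ∨ (j:ℕ) = 3 ∨ (j:ℕ) = 4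
          ∨ (j:ℕ) = 5 := by omega
      rcases hval with hval | hval | hval | hval | hval | hval
      · have hje : j = ⟨0, by omega⟩ := Fin.ext hval
        rw [hje]
        have := congrArg (fun z : ℤ => (z : ℝ)) hsum0
        push_cast at this ⊢
        norm_num
        rw [show (⟨0, by omega⟩ : Fin (2*2+2+s)) = 0 from rfl] at this
        linarith
      · have hje : j = ⟨1, by omega⟩ := Fin.ext hval
        rw [hje]; norm_num
      · have hje : j = ⟨2, by omega⟩ := Fin.ext hval
        rw [hje]; norm_num
      · have hje : j = ⟨3, by omega⟩ := Fin.ext hval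
        rw [hje]; norm_num
      · have hje : j = ⟨4, by omega⟩ := Fin.ext hval
        rw [hje]; norm_num
      · have hje : j = ⟨5, by omega⟩ := Fin.ext hval
        rw [hje]; norm_num
    · rw [hz j h]
      have c0 : ¬(j:ℕ) = 0 := by omega
      have c1 : ¬(j:ℕ) = 1 := by omega
      have c2 : ¬(j:ℕ) = 2 := by omega
      have c3 : ¬(j:ℕ) = 3 := by omega
      have c4 : ¬(j:ℕ) = 4 := by omega
      have c5 : ¬(j:ℕ) = 5 := by omega
      simp [c0, c1, c2, c3, c4, c5]
  rw [heq]
  exact Submodule.sum_mem _ (fun k _ => Submodule.smul_mem _ _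
    (Submodule.subset_span ⟨k, rfl⟩))

/- ### Rank computation -/

private def bw (s : ℕ) (i : Fin (5+s)) : Fin (2*2+2+s) → ℤ := wv (2*2+2+s) ((i : ℕ)+1)

private lemma bw_li (s : ℕ) : LinearIndependent ℤ (bw s) := by
  rw [Fintype.linearIndependent_iff]
  intro c hc i
  have := congrFun hc ⟨(i : ℕ)+1, by omega⟩
  simp only [Finset.sum_apply, Pi.smul_apply, smul_eq_mul, bw, wv, Pi.zero_apply] at this
  rw [Finset.sum_eq_single i] at this
  · simp at this
    omega
  · intro k _ hki
    have h1 : ¬((((⟨(i:ℕ)+1, by omega⟩ : Fin (2*2+2+s)) : ℕ)) = (k:ℕ)+1) := by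
      simp only [Fin.ext_iff] at hki ⊢
      omega
    rw [if_neg h1, if_neg (by simp)]
    ring
  · simp

private lemma two_smul_mem {s : ℕ} {v : Fin (2*2+2+s) → ℤ} (hv : v ∈ hyperL 2 s) :
    (2:ℤ) • v ∈ Submodule.span ℤ (Set.range (bw s)) := by
  induction hv using Submodule.span_induction with
  | mem x hx =>
    rcases hx with hx | ⟨k, hk1, hk2, rfl⟩
    · rcases hx with rfl
      have heq : (2:ℤ) • uv 2 s = wv (2*2+2+s) 1 + wv (2*2+2+s) 2 + wv (2*2+2+s) 3
          + wv (2*2+2+s) 4 + wv (2*2+2+s) 5 := by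
        funext j
        simp only [Pi.smul_apply, Pi.add_apply, smul_eq_mul, uv, wv]
        rcases lt_or_ge (j : ℕ) 6 with h | h
        · have : (j:ℕ) = 0 ∨ (j:ℕ) = 1 ∨ (j:ℕ) = 2 ∨ (j:ℕ) = 3 ∨ (j:ℕ) = 4
              ∨ (j:ℕ) = 5 := by omega
          rcases this with h | h | h | h | h | h <;> simp [h]
        · have c0 : ¬(j:ℕ) = 0 := by omega
          have c1 : ¬(j:ℕ) = 1 := by omega
          have c2 : ¬(j:ℕ) = 2 := by omega
          have c3 : ¬(j:ℕ) = 3 := by omega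
          have c4 : ¬(j:ℕ) = 4 := by omega
          have c5 : ¬(j:ℕ) = 5 := by omega
          have c6 : ¬(j:ℕ) ≤ 5 := by omega
          simp [c0, c1, c2, c3, c4, c5, c6]
      rw [heq]
      have hm : ∀ (r : ℕ) (i : Fin (5+s)), (i:ℕ)+1 = r →
          wv (2*2+2+s) r ∈ Submodule.span ℤ (Set.range (bw s)) := by
        rintro r i rfl
        exact Submodule.subset_span ⟨i, rfl⟩
      exact add_mem (add_mem (add_mem (add_mem
        (hm 1 ⟨0, by omega⟩ rfl) (hm 2 ⟨1, by omega⟩ rfl)) (hm 3 ⟨2, by omega⟩ rfl))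
        (hm 4 ⟨3, by omega⟩ rfl)) (hm 5 ⟨4, by omega⟩ rfl)
    · apply Submodule.smul_mem
      refine Submodule.subset_span ⟨⟨k-1, by omega⟩, ?_⟩
      show wv (2*2+2+s) ((k-1)+1) = wv (2*2+2+s) k
      rw [Nat.sub_add_cancel hk1]
  | zero => simp
  | add x y hx hy ihx ihy => rw [smul_add]; exact add_mem ihx ihy
  | smul a x hx ih => rw [smul_comm]; exact Submodule.smul_mem _ _ ih

private lemma finrank_hyperL (s : ℕ) : Module.finrank ℤ (hyperL 2 s) = 5 + s := by
  classical
  have hli := bw_li s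
  set Msp := Submodule.span ℤ (Set.range (bw s)) with hMsp
  let hbasis : Module.Basis (Fin (5+s)) ℤ Msp := Module.Basis.span hli
  have hfinM : Module.Finite ℤ Msp := Module.Finite.of_basis hbasis
  have hMrank : Module.finrank ℤ Msp = 5 + s := by
    rw [Module.finrank_eq_card_basis hbasis, Fintype.card_fin]
  have hle : Msp ≤ hyperL 2 s := by
    rw [hMsp, Submodule.span_le]
    rintro x ⟨i, rfl⟩
    exact Submodule.subset_span (Or.inr ⟨(i:ℕ)+1, by omega, by omega, rfl⟩)
  have h1 : 5 + s ≤ Module.finrank ℤ (hyperL 2 s) := by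
    have h := Submodule.rank_mono (R := ℤ) hle
    have e1 := Submodule.finrank_eq_rank (R := ℤ) (M := Fin (2*2+2+s) → ℤ) Msp
    have e2 := Submodule.finrank_eq_rank (R := ℤ) (M := Fin (2*2+2+s) → ℤ) (hyperL 2 s)
    rw [← e1, ← e2] at h
    rw [← hMrank]
    exact_mod_cast h
  have hr : IsSMulRegular (Fin (2*2+2+s) → ℤ) (2:ℤ) :=
    smul_right_injective _ two_ne_zero
  have h2 : Module.finrank ℤ (hyperL 2 s) ≤ Module.finrank ℤ Msp :=
    LinearMap.finrank_le_of_isSMulRegular (hyperL 2 s) Msp hr (fun x hx => two_smul_mem hx)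
  omega

/-- For `g = 2` and any `s ≥ 1`, the lattice `L(2,s)` is not well-rounded:
the minimum squared Euclidean norm of a nonzero vector of `L(2,s)` equals `6`,
but any ℝ-linearly independent family of vectors of `L(2,s)`, each of squared norm `6`,
has at most `5` elements, whereas `L(2,s)` has rank `5+s ≥ 6`. -/
theorem stmt2 (s : ℕ) (hs : 1 ≤ s) :
    (∀ v ∈ hyperL 2 s, v ≠ 0 → 6 ≤ ∑ j, (v j)^2) ∧
    (∃ v ∈ hyperL 2 s, v ≠ 0 ∧ ∑ j, (v j)^2 = 6) ∧
    (∀ (ι : Type) [Fintype ι] (f : ι → (Fin (2*2+2+s) → ℤ)),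
      (∀ i, f i ∈ hyperL 2 s) → (∀ i, ∑ j, (f i j)^2 = 6) →
      LinearIndependent ℝ (fun (i : ι) (j : Fin (2*2+2+s)) => ((f i j : ℤ) : ℝ)) →
      Fintype.card ι ≤ 5) ∧
    Module.finrank ℤ (hyperL 2 s) = 5 + s ∧ 6 ≤ 5 + s := by
  refine ⟨fun v hv h0 => norm_low hv h0, ⟨mv s, mv_mem s, mv_ne s, mv_norm s⟩, ?_, 
    finrank_hyperL s, by omega⟩
  intro ι _ f hmem hnorm hli
  set S := Submodule.span ℝ (Set.range (cvec s)) with hS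
  have hfS : ∀ i, (fun j => ((f i j : ℤ) : ℝ)) ∈ S :=
    fun i => min_in_span (hmem i) (hnorm i)
  let g : ι → S := fun i => ⟨_, hfS i⟩
  have hgli : LinearIndependent ℝ g := hli.of_comp S.subtype
  have : Fintype.card ι ≤ Module.finrank ℝ S := hgli.fintype_card_le_finrank
  calc Fintype.card ι ≤ Module.finrank ℝ S := this
  _ ≤ Fintype.card (Fin 5) := finrank_range_le_card (cvec s)
  _ = 5 := by simp
end

section
/- For g = 2 and any integer s ≥ 1, the successive minima of L(2,s) are λ_1 = λ_2 = λ_3 = λ_4 = λ_5 = √6 and λ_6 = λ_7 = ⋯ = λ_{5+s} = √8. Equivalently: every nonzero v ∈ L(2,s) has norm ≥ √6; there exist 5 linearly independent vectors of L(2,s) of norm √6; any 6 linearly independent vectors of L(2,s) contain one of norm ≥ √8; and there exist 5+s linearly independent vectors v_1,…,v_{5+s} of L(2,s) with ‖v_i‖ = √6 for i ≤ 5 and ‖v_i‖ = √8 for i ≥ 6. -/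
/- ## Auxiliary definitions -/

/-- Sign pattern: `+1` at positions `0, a, b`, `-1` at other positions `≤ 5`, `0` beyond. -/
def sv (a b : ℕ) : ℕ → ℤ :=
  fun j => if j = 0 ∨ j = a ∨ j = b then 1 else if j ≤ 5 then -1 else 0

def av : ℕ → ℕ
  | 2 => 2
  | _ => 1

def bv : ℕ → ℕ
  | 0 => 2
  | 1 => 3
  | 2 => 3
  | 3 => 4
  | _ => 5

/-- The `p`-th short vector (norm² = 6), for `p < 5`. -/
def svec (s p : ℕ) : Fin (2*2+2+s) → ℤ := fun j => sv (av p) (bv p) (j : ℕ)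

/-- Family of `5+s` vectors: five short ones and `s` of the `w_k` with `k` inert. -/
def bigF (s : ℕ) (i : Fin (5+s)) : Fin (2*2+2+s) → ℤ :=
  if (i : ℕ) < 5 then svec s (i : ℕ) else wv (2*2+2+s) ((i : ℕ)+1)

def emb5 (s k : ℕ) : Fin (5+s) := ⟨k % 5, Nat.lt_of_lt_of_le (Nat.mod_lt _ (by omega)) (Nat.le_add_right 5 s)⟩

/-- Spanning vectors of the 5-dimensional subspace containing all norm-√6 vectors. -/
def Dv (s : ℕ) (k : Fin 5) : Fin (2*2+2+s) → ℝ :=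
  fun j => if (j : ℕ) = (k : ℕ) + 1 then 1 else if (j : ℕ) = 0 then -1 else 0

/- ## Sum helpers -/

lemma split6 (s : ℕ) (F : ℕ → ℤ) :
    ∑ i ∈ Finset.range (2*2+2+s), F i
      = ∑ i ∈ Finset.range 6, F i + ∑ i ∈ Finset.Ico 6 (2*2+2+s), F i := by
  rw [Finset.range_eq_Ico, ← Finset.sum_Ico_consecutive F (Nat.zero_le 6) (by omega), ← Finset.range_eq_Ico]

lemma sum5tail (s : ℕ) (t : Fin (5+s) → ℝ)
    (ht : ∀ i : Fin (5+s), 5 ≤ (i : ℕ) → t i = 0) :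
    ∑ i, t i = t (emb5 s 0) + t (emb5 s 1) + t (emb5 s 2) + t (emb5 s 3) + t (emb5 s 4) := by
  have h1 : ∑ i : Fin (5+s), t i
      = ∑ i ∈ Finset.range (5+s), (fun n => if h : n < 5+s then t ⟨n, h⟩ else 0) i := by
    rw [← Fin.sum_univ_eq_sum_range]
    exact Finset.sum_congr rfl fun i _ => by rw [dif_pos i.isLt, Fin.eta]
  have h2 : ∑ i ∈ Finset.Ico 5 (5+s), (fun n => if h : n < 5+s then t ⟨n, h⟩ else 0) i = 0 := by
    refine Finset.sum_eq_zero fun i hi => ?_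
    rw [Finset.mem_Ico] at hi
    simp only [dif_pos hi.2]
    exact ht _ hi.1
  have key : ∀ (k : ℕ) (h : k < 5+s), k < 5 → t ⟨k, h⟩ = t (emb5 s k) := fun k h h5 =>
    congrArg t (Fin.ext (by simp [emb5, Nat.mod_eq_of_lt h5]))
  rw [h1, Finset.range_eq_Ico, ← Finset.sum_Ico_consecutive _ (Nat.zero_le 5) (by omega : 5 ≤ 5+s),
    h2, add_zero, ← Finset.range_eq_Ico,
    Finset.sum_range_succ, Finset.sum_range_succ, Finset.sum_range_succ,
    Finset.sum_range_succ, Finset.sum_range_succ, Finset.sum_range_zero]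
  simp only [dif_pos (by omega : (0:ℕ) < 5+s), dif_pos (by omega : (1:ℕ) < 5+s),
    dif_pos (by omega : (2:ℕ) < 5+s), dif_pos (by omega : (3:ℕ) < 5+s),
    dif_pos (by omega : (4:ℕ) < 5+s), zero_add]
  rw [key 0 (by omega) (by omega), key 1 (by omega) (by omega), key 2 (by omega) (by omega),
    key 3 (by omega) (by omega), key 4 (by omega) (by omega)]

/- ## Invariants of lattice membership -/

lemma hyperL_props (s : ℕ) (v : Fin (2*2+2+s) → ℤ) (hv : v ∈ hyperL 2 s) :
    (∑ j, v j) = 0 ∧ (∀ j : Fin (2*2+2+s), 6 ≤ (j : ℕ) → 2 ∣ v j) ∧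
      (∀ j k : Fin (2*2+2+s), (j : ℕ) ≤ 5 → (k : ℕ) ≤ 5 → 2 ∣ (v j - v k)) := by
  refine Submodule.span_induction ?_ ?_ ?_ ?_ hv
  · rintro x (rfl | ⟨k, hk1, hk2, rfl⟩)
    · refine ⟨?_, ?_, ?_⟩
      · have h0 : ∑ j : Fin (2*2+2+s), uv 2 s j
            = ∑ i ∈ Finset.range (2*2+2+s),
              (fun i : ℕ => if i = 0 then -(2*(2:ℤ)+1) else if i ≤ 2*2+1 then 1 else 0) i :=
          Fin.sum_univ_eq_sum_range
            (fun i : ℕ => if i = 0 then -(2*(2:ℤ)+1) else if i ≤ 2*2+1 then 1 else 0) (2*2+2+s)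
        rw [h0, split6]
        have h2 : ∑ i ∈ Finset.Ico 6 (2*2+2+s),
            (fun i : ℕ => if i = 0 then -(2*(2:ℤ)+1) else if i ≤ 2*2+1 then 1 else 0) i = 0 := by
          refine Finset.sum_eq_zero fun i hi => ?_
          rw [Finset.mem_Ico] at hi
          show (if i = 0 then -(2*(2:ℤ)+1) else if i ≤ 2*2+1 then 1 else 0) = 0
          rw [if_neg (by omega), if_neg (by omega)]
        rw [h2, add_zero]
        decide
      · intro j hj
        simp only [uv]
        rw [if_neg (by omega), if_neg (by omega)]
        exact dvd_zero 2
      · intro j k hj hk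
        simp only [uv]
        split_ifs <;> omega
    · refine ⟨?_, ?_, ?_⟩
      · have h0 : ∑ j : Fin (2*2+2+s), wv (2*2+2+s) k j
            = ∑ i ∈ Finset.range (2*2+2+s),
              ((if i = k then (2:ℤ) else 0) + (if i = 0 then -2 else 0)) :=
          Fin.sum_univ_eq_sum_range
            (fun i : ℕ => (if i = k then (2:ℤ) else 0) + (if i = 0 then -2 else 0)) (2*2+2+s)
        rw [h0, Finset.sum_add_distrib,
          Finset.sum_ite_eq' (Finset.range (2*2+2+s)) k (fun _ => (2:ℤ)),
          Finset.sum_ite_eq' (Finset.range (2*2+2+s)) 0 (fun _ => (-2:ℤ)),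
          if_pos (Finset.mem_range.mpr (by omega)), if_pos (Finset.mem_range.mpr (by omega))]
        norm_num
      · intro j hj
        simp only [wv]
        split_ifs <;> omega
      · intro j k' hj hk'
        simp only [wv]
        split_ifs <;> omega
  · refine ⟨by simp, by simp, by simp⟩
  · rintro x y hx hy ⟨hx1, hx2, hx3⟩ ⟨hy1, hy2, hy3⟩
    refine ⟨?_, ?_, ?_⟩
    · simp only [Pi.add_apply, Finset.sum_add_distrib, hx1, hy1, add_zero]
    · intro j hj
      have := hx2 j hj; have := hy2 j hj
      simp only [Pi.add_apply]; omega
    · intro j k hj hk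
      have := hx3 j k hj hk; have := hy3 j k hj hk
      simp only [Pi.add_apply]; omega
  · rintro a x hx ⟨hx1, hx2, hx3⟩
    refine ⟨?_, ?_, ?_⟩
    · simp only [Pi.smul_apply, smul_eq_mul, ← Finset.mul_sum, hx1, mul_zero]
    · intro j hj
      simpa [Pi.smul_apply, smul_eq_mul] using (hx2 j hj).mul_left a
    · intro j k hj hk
      simpa [Pi.smul_apply, smul_eq_mul, ← mul_sub] using (hx3 j k hj hk).mul_left a

/- ## Lower bounds -/

lemma sq1 (a : ℤ) (h : a ≠ 0) : 1 ≤ a^2 := by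
  rcases lt_trichotomy a 0 with h' | h' | h'
  · nlinarith
  · exact absurd h' h
  · nlinarith

lemma sq4 (a : ℤ) (h : a ≠ 0) (he : 2 ∣ a) : 4 ≤ a^2 := by
  obtain ⟨c, rfl⟩ := he
  have hc : c ≠ 0 := by rintro rfl; simp at h
  have := sq1 c hc
  nlinarith

lemma ram_card (s : ℕ) :
    (Finset.univ.filter (fun j : Fin (2*2+2+s) => (j : ℕ) ≤ 5)).card = 6 := by
  rw [Finset.card_filter]
  have h0 : ∑ j : Fin (2*2+2+s), (if (j : ℕ) ≤ 5 then 1 else 0)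
      = ∑ i ∈ Finset.range (2*2+2+s), (fun i : ℕ => if i ≤ 5 then 1 else 0) i :=
    Fin.sum_univ_eq_sum_range (fun i : ℕ => if i ≤ 5 then 1 else 0) (2*2+2+s)
  rw [h0, Finset.range_eq_Ico, ← Finset.sum_Ico_consecutive _ (Nat.zero_le 6) (by omega : 6 ≤ 2*2+2+s)]
  have h2 : ∑ i ∈ Finset.Ico 6 (2*2+2+s), (fun i : ℕ => if i ≤ 5 then 1 else 0) i = 0 := by
    refine Finset.sum_eq_zero fun i hi => ?_
    rw [Finset.mem_Ico] at hi
    show (if i ≤ 5 then 1 else 0) = 0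
    rw [if_neg (by omega)]
  rw [h2, add_zero, ← Finset.range_eq_Ico]
  decide

lemma lb_main (s : ℕ) (v : Fin (2*2+2+s) → ℤ) (hv : v ∈ hyperL 2 s) :
    (v ≠ 0 → 6 ≤ ∑ j, (v j)^2) ∧
      ((∃ j : Fin (2*2+2+s), 6 ≤ (j : ℕ) ∧ v j ≠ 0) → 8 ≤ ∑ j, (v j)^2) := by
  obtain ⟨hsum, hinert, hpar⟩ := hyperL_props s v hv
  have hnn : ∀ j ∈ (Finset.univ : Finset (Fin (2*2+2+s))), 0 ≤ (v j)^2 := fun j _ => sq_nonneg _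
  by_cases hodd : ∃ j : Fin (2*2+2+s), (j : ℕ) ≤ 5 ∧ ¬ 2 ∣ v j
  · obtain ⟨j0, hj0, hj0odd⟩ := hodd
    have hall : ∀ j : Fin (2*2+2+s), (j : ℕ) ≤ 5 → v j ≠ 0 := by
      intro j hj hjz
      have := hpar j j0 hj hj0
      rw [hjz] at this
      omega
    set R := Finset.univ.filter (fun j : Fin (2*2+2+s) => (j : ℕ) ≤ 5) with hR
    have h6 : (6:ℤ) ≤ ∑ j ∈ R, (v j)^2 := by
      have := Finset.card_nsmul_le_sum R (fun j => (v j)^2) 1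
        (fun j hj => sq1 _ (hall j (by simpa [hR] using hj)))
      rw [ram_card s] at this
      simpa using this
    have hsub : ∑ j ∈ R, (v j)^2 ≤ ∑ j, (v j)^2 :=
      Finset.sum_le_sum_of_subset_of_nonneg (Finset.filter_subset _ _) (fun j _ _ => sq_nonneg _)
    constructor
    · intro _; linarith
    · rintro ⟨j1, hj16, hj1⟩
      have hj1R : j1 ∉ R := by simp [hR]; omega
      have h1 : ∑ j ∈ insert j1 R, (v j)^2 = (v j1)^2 + ∑ j ∈ R, (v j)^2 :=
        Finset.sum_insert hj1R
      have h2 : ∑ j ∈ insert j1 R, (v j)^2 ≤ ∑ j, (v j)^2 :=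
        Finset.sum_le_sum_of_subset_of_nonneg (Finset.subset_univ _) (fun j _ _ => sq_nonneg _)
      have h3 : 4 ≤ (v j1)^2 := sq4 _ hj1 (hinert j1 hj16)
      linarith
  · push_neg at hodd
    have heven : ∀ j : Fin (2*2+2+s), 2 ∣ v j := by
      intro j
      by_cases hj : (j : ℕ) ≤ 5
      · exact hodd j hj
      · exact hinert j (by omega)
    have aux : ∀ j1 : Fin (2*2+2+s), v j1 ≠ 0 → 8 ≤ ∑ j, (v j)^2 := by
      intro j1 h1
      have hex : ∃ j2, j2 ≠ j1 ∧ v j2 ≠ 0 := by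
        by_contra hc
        push_neg at hc
        have hone : ∑ j, v j = v j1 :=
          Finset.sum_eq_single j1 (fun b _ hb => hc b hb) (by simp)
        exact h1 (by rw [← hone]; exact hsum)
      obtain ⟨j2, hj2ne, hj2⟩ := hex
      have hpair : ∑ j ∈ ({j2, j1} : Finset (Fin (2*2+2+s))), (v j)^2 = (v j2)^2 + (v j1)^2 :=
        Finset.sum_pair hj2ne
      have hsub : ∑ j ∈ ({j2, j1} : Finset (Fin (2*2+2+s))), (v j)^2 ≤ ∑ j, (v j)^2 :=
        Finset.sum_le_sum_of_subset_of_nonneg (Finset.subset_univ _) (fun j _ _ => sq_nonneg _)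
      have h4a := sq4 _ hj2 (heven j2)
      have h4b := sq4 _ h1 (heven j1)
      linarith
    constructor
    · intro hne
      obtain ⟨j1, h1⟩ := Function.ne_iff.mp hne
      linarith [aux j1 h1]
    · rintro ⟨j1, _, h1⟩
      exact aux j1 h1

/- ## The explicit short vectors -/

lemma wv_mem (s k : ℕ) (h1 : 1 ≤ k) (h2 : k ≤ 2*2+1+s) :
    wv (2*2+2+s) k ∈ hyperL 2 s :=
  Submodule.subset_span (Or.inr ⟨k, h1, h2, rfl⟩)

lemma uv_mem (s : ℕ) : uv 2 s ∈ hyperL 2 s :=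
  Submodule.subset_span (Or.inl rfl)

lemma svec_mem (s p : ℕ) (hp : p < 5) : svec s p ∈ hyperL 2 s := by
  have key : ∀ c d e : ℕ, 1 ≤ c → c ≤ 5 → 1 ≤ d → d ≤ 5 → 1 ≤ e → e ≤ 5 →
      (svec s p = uv 2 s - wv (2*2+2+s) c - wv (2*2+2+s) d - wv (2*2+2+s) e) →
      svec s p ∈ hyperL 2 s := by
    intro c d e hc1 hc5 hd1 hd5 he1 he5 heq
    rw [heq]
    exact sub_mem (sub_mem (sub_mem (uv_mem s) (wv_mem s c hc1 (by omega)))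
      (wv_mem s d hd1 (by omega))) (wv_mem s e he1 (by omega))
  interval_cases p
  · exact key 3 4 5 (by norm_num) (by norm_num) (by norm_num) (by norm_num) (by norm_num)
      (by norm_num) (by
        funext j
        simp only [svec, sv, av, bv, uv, wv, Pi.sub_apply]
        split_ifs <;> omega)
  · exact key 2 4 5 (by norm_num) (by norm_num) (by norm_num) (by norm_num) (by norm_num)
      (by norm_num) (by
        funext j
        simp only [svec, sv, av, bv, uv, wv, Pi.sub_apply]
        split_ifs <;> omega)
  · exact key 1 4 5 (by norm_num) (by norm_num) (by norm_num) (by norm_num) (by norm_num)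
      (by norm_num) (by
        funext j
        simp only [svec, sv, av, bv, uv, wv, Pi.sub_apply]
        split_ifs <;> omega)
  · exact key 2 3 5 (by norm_num) (by norm_num) (by norm_num) (by norm_num) (by norm_num)
      (by norm_num) (by
        funext j
        simp only [svec, sv, av, bv, uv, wv, Pi.sub_apply]
        split_ifs <;> omega)
  · exact key 2 3 4 (by norm_num) (by norm_num) (by norm_num) (by norm_num) (by norm_num)
      (by norm_num) (by
        funext j
        simp only [svec, sv, av, bv, uv, wv, Pi.sub_apply]
        split_ifs <;> omega)

lemma svec_norm (s p : ℕ) (hp : p < 5) : ∑ j, (svec s p j)^2 = 6 := by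
  have h0 : ∑ j : Fin (2*2+2+s), (svec s p j)^2
      = ∑ i ∈ Finset.range (2*2+2+s), (fun i : ℕ => (sv (av p) (bv p) i)^2) i :=
    Fin.sum_univ_eq_sum_range (fun i : ℕ => (sv (av p) (bv p) i)^2) (2*2+2+s)
  rw [h0, split6]
  have hab : av p ≤ 5 ∧ bv p ≤ 5 := by interval_cases p <;> decide
  have h2 : ∑ i ∈ Finset.Ico 6 (2*2+2+s), (fun i : ℕ => (sv (av p) (bv p) i)^2) i = 0 := by
    refine Finset.sum_eq_zero fun i hi => ?_
    rw [Finset.mem_Ico] at hi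
    show (sv (av p) (bv p) i)^2 = 0
    simp only [sv]
    rw [if_neg (by omega), if_neg (by omega)]
    ring
  rw [h2, add_zero]
  interval_cases p <;> decide

lemma wv_norm (s k : ℕ) (hk0 : k ≠ 0) (hk : k < 2*2+2+s) :
    ∑ j, (wv (2*2+2+s) k j)^2 = 8 := by
  have h0 : ∑ j : Fin (2*2+2+s), (wv (2*2+2+s) k j)^2
      = ∑ i ∈ Finset.range (2*2+2+s),
          (fun i : ℕ => ((if i = k then (2:ℤ) else 0) + (if i = 0 then -2 else 0))^2) i :=
    Fin.sum_univ_eq_sum_range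
      (fun i : ℕ => ((if i = k then (2:ℤ) else 0) + (if i = 0 then -2 else 0))^2) (2*2+2+s)
  have hptw : ∀ i : ℕ, ((if i = k then (2:ℤ) else 0) + (if i = 0 then -2 else 0))^2
      = (if i = k then (4:ℤ) else 0) + (if i = 0 then 4 else 0) := by
    intro i
    split_ifs with h1 h2
    · exfalso; omega
    · norm_num
    · norm_num
    · norm_num
  rw [h0, Finset.sum_congr rfl (fun i _ => hptw i), Finset.sum_add_distrib,
    Finset.sum_ite_eq' (Finset.range (2*2+2+s)) k (fun _ => (4:ℤ)),
    Finset.sum_ite_eq' (Finset.range (2*2+2+s)) 0 (fun _ => (4:ℤ)),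
    if_pos (Finset.mem_range.mpr hk), if_pos (Finset.mem_range.mpr (by omega))]
  norm_num

/- ## The 5-dimensional subspace containing all short vectors -/

lemma sum_eq_six (s : ℕ) (v : Fin (2*2+2+s) → ℤ)
    (hin : ∀ j : Fin (2*2+2+s), 6 ≤ (j : ℕ) → v j = 0) :
    ∑ j, v j = v ⟨0, by omega⟩ + v ⟨1, by omega⟩ + v ⟨2, by omega⟩
      + v ⟨3, by omega⟩ + v ⟨4, by omega⟩ + v ⟨5, by omega⟩ := by
  have h1 : ∑ j : Fin (2*2+2+s), v j
      = ∑ i ∈ Finset.range (2*2+2+s), (fun n => if h : n < 2*2+2+s then v ⟨n, h⟩ else 0) i := by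
    rw [← Fin.sum_univ_eq_sum_range]
    exact Finset.sum_congr rfl fun i _ => by rw [dif_pos i.isLt, Fin.eta]
  have h2 : ∑ i ∈ Finset.Ico 6 (2*2+2+s), (fun n => if h : n < 2*2+2+s then v ⟨n, h⟩ else 0) i = 0 := by
    refine Finset.sum_eq_zero fun i hi => ?_
    rw [Finset.mem_Ico] at hi
    simp only [dif_pos hi.2]
    exact hin _ hi.1
  rw [h1, Finset.range_eq_Ico,
    ← Finset.sum_Ico_consecutive _ (Nat.zero_le 6) (by omega : 6 ≤ 2*2+2+s),
    h2, add_zero, ← Finset.range_eq_Ico,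
    Finset.sum_range_succ, Finset.sum_range_succ, Finset.sum_range_succ,
    Finset.sum_range_succ, Finset.sum_range_succ, Finset.sum_range_succ, Finset.sum_range_zero]
  simp only [dif_pos (by omega : (0:ℕ) < 2*2+2+s), dif_pos (by omega : (1:ℕ) < 2*2+2+s),
    dif_pos (by omega : (2:ℕ) < 2*2+2+s), dif_pos (by omega : (3:ℕ) < 2*2+2+s),
    dif_pos (by omega : (4:ℕ) < 2*2+2+s), dif_pos (by omega : (5:ℕ) < 2*2+2+s), zero_add]

lemma mem_span_Dv (s : ℕ) (v : Fin (2*2+2+s) → ℤ) (h0 : ∑ j, v j = 0)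
    (hin : ∀ j : Fin (2*2+2+s), 6 ≤ (j : ℕ) → v j = 0) :
    (fun j => ((v j : ℤ) : ℝ)) ∈ Submodule.span ℝ (Set.range (Dv s)) := by
  have hexp := sum_eq_six s v hin
  rw [h0] at hexp
  set vx : ℕ → ℝ := fun n => if h : n < 2*2+2+s then ((v ⟨n, h⟩ : ℤ) : ℝ) else 0 with hvx
  have hvxe : ∀ (n : ℕ) (h : n < 2*2+2+s), vx n = ((v ⟨n, h⟩ : ℤ) : ℝ) := by
    intro n h
    rw [hvx]
    simp only [dif_pos h]
  have hcast : vx 0 + vx 1 + vx 2 + vx 3 + vx 4 + vx 5 = 0 := by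
    rw [hvxe 0 (by omega), hvxe 1 (by omega), hvxe 2 (by omega), hvxe 3 (by omega),
      hvxe 4 (by omega), hvxe 5 (by omega)]
    exact_mod_cast hexp.symm
  have key : (fun j => ((v j : ℤ) : ℝ)) = ∑ k : Fin 5, vx ((k : ℕ) + 1) • Dv s k := by
    funext j
    rw [Finset.sum_apply, Fin.sum_univ_five]
    simp only [Pi.smul_apply, Dv, smul_eq_mul,
      show ((0:Fin 5):ℕ) = 0 from rfl, show ((1:Fin 5):ℕ) = 1 from rfl,
      show ((2:Fin 5):ℕ) = 2 from rfl, show ((3:Fin 5):ℕ) = 3 from rfl,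
      show ((4:Fin 5):ℕ) = 4 from rfl]
    have hjlt := j.isLt
    have hvj : ∀ (n : ℕ) (h : n < 2*2+2+s), (j : ℕ) = n → ((v j : ℤ) : ℝ) = vx n := by
      intro n h hn
      rw [hvxe n h]
      norm_cast
      exact congrArg v (Fin.ext hn)
    by_cases e0 : (j : ℕ) = 0
    · rw [hvj 0 (by omega) e0]
      simp only [e0]
      norm_num
      linarith
    · by_cases e1 : (j : ℕ) = 1
      · rw [hvj 1 (by omega) e1]
        simp [e1]
      · by_cases e2 : (j : ℕ) = 2
        · rw [hvj 2 (by omega) e2]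
          simp [e2]
        · by_cases e3 : (j : ℕ) = 3
          · rw [hvj 3 (by omega) e3]
            simp [e3]
          · by_cases e4 : (j : ℕ) = 4
            · rw [hvj 4 (by omega) e4]
              simp [e4]
            · by_cases e5 : (j : ℕ) = 5
              · rw [hvj 5 (by omega) e5]
                simp [e5]
              · rw [hin j (by omega)]
                have f1 : ¬ (j : ℕ) = 0 + 1 := by omega
                have f2 : ¬ (j : ℕ) = 1 + 1 := by omega
                have f3 : ¬ (j : ℕ) = 2 + 1 := by omega
                have f4 : ¬ (j : ℕ) = 3 + 1 := by omega
                have f5 : ¬ (j : ℕ) = 4 + 1 := by omega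
                simp [e0, f1, f2, f3, f4, f5]
  rw [key]
  exact Submodule.sum_mem _ fun k _ =>
    Submodule.smul_mem _ _ (Submodule.subset_span ⟨k, rfl⟩)

lemma avbv_le (p : ℕ) (hp : p < 5) :
    av p ≤ 5 ∧ bv p ≤ 5 := by
  interval_cases p <;> decide

set_option maxHeartbeats 1000000

/-- For `g = 2` and any `s ≥ 1`, the successive minima of `L(2,s)` are
`λ₁ = ⋯ = λ₅ = √6` and `λ₆ = ⋯ = λ_{5+s} = √8`. Equivalently (in terms of squared
Euclidean norms): every nonzero `v ∈ L(2,s)` has squared norm `≥ 6`; there exist `5`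
ℝ-linearly independent vectors of `L(2,s)` of squared norm `6`; among any `6`
ℝ-linearly independent vectors of `L(2,s)` one has squared norm `≥ 8`; and there exist
`5+s` ℝ-linearly independent vectors `v₁,…,v_{5+s}` of `L(2,s)` with squared norm `6`
for `i ≤ 5` and squared norm `8` for `i ≥ 6`. -/
theorem stmt3 (s : ℕ) (hs : 1 ≤ s) :
    (∀ v ∈ hyperL 2 s, v ≠ 0 → 6 ≤ ∑ j, (v j)^2) ∧
    (∃ f : Fin 5 → (Fin (2*2+2+s) → ℤ),
      (∀ i, f i ∈ hyperL 2 s) ∧ (∀ i, ∑ j, (f i j)^2 = 6) ∧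
      LinearIndependent ℝ (fun (i : Fin 5) (j : Fin (2*2+2+s)) => ((f i j : ℤ) : ℝ))) ∧
    (∀ f : Fin 6 → (Fin (2*2+2+s) → ℤ),
      (∀ i, f i ∈ hyperL 2 s) →
      LinearIndependent ℝ (fun (i : Fin 6) (j : Fin (2*2+2+s)) => ((f i j : ℤ) : ℝ)) →
      ∃ i, 8 ≤ ∑ j, (f i j)^2) ∧
    (∃ f : Fin (5+s) → (Fin (2*2+2+s) → ℤ),
      (∀ i, f i ∈ hyperL 2 s) ∧
      (∀ i : Fin (5+s), (i : ℕ) < 5 → ∑ j, (f i j)^2 = 6) ∧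
      (∀ i : Fin (5+s), 5 ≤ (i : ℕ) → ∑ j, (f i j)^2 = 8) ∧
      LinearIndependent ℝ
        (fun (i : Fin (5+s)) (j : Fin (2*2+2+s)) => ((f i j : ℤ) : ℝ))) := by
  refine ⟨?_, ?_, ?_, ?_⟩
  · -- Part 1
    intro v hv hne
    exact (lb_main s v hv).1 hne
  · -- Part 2
    refine ⟨fun i => svec s (i : ℕ), fun i => svec_mem s _ i.isLt,
      fun i => svec_norm s _ i.isLt, ?_⟩
    rw [Fintype.linearIndependent_iff]
    intro c hc i
    have hpt : ∀ (m : ℕ) (hm : m < 2*2+2+s),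
        c 0 * ((sv 1 2 m : ℤ) : ℝ) + c 1 * ((sv 1 3 m : ℤ) : ℝ) + c 2 * ((sv 2 3 m : ℤ) : ℝ)
          + c 3 * ((sv 1 4 m : ℤ) : ℝ) + c 4 * ((sv 1 5 m : ℤ) : ℝ) = 0 := by
      intro m hm
      have h := congrFun hc ⟨m, hm⟩
      rw [Finset.sum_apply, Fin.sum_univ_five] at h
      exact h
    have e0 := hpt 0 (by omega)
    have e1 := hpt 1 (by omega)
    have e2 := hpt 2 (by omega)
    have e3 := hpt 3 (by omega)
    have e4 := hpt 4 (by omega)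
    have e5 := hpt 5 (by omega)
    norm_num [sv] at e0 e1 e2 e3 e4 e5
    have h0 : c 0 = 0 := by linarith
    have h1 : c 1 = 0 := by linarith
    have h2 : c 2 = 0 := by linarith
    have h3 : c 3 = 0 := by linarith
    have h4 : c 4 = 0 := by linarith
    fin_cases i <;> assumption
  · -- Part 3
    intro f hmem hli
    by_contra hcon
    push_neg at hcon
    have hlt : ∀ i, ∑ j, (f i j)^2 ≤ 7 := fun i => by have := hcon i; omega
    have hin : ∀ i, ∀ j : Fin (2*2+2+s), 6 ≤ (j : ℕ) → f i j = 0 := by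
      intro i j hj
      by_contra hne
      have h8 := (lb_main s (f i) (hmem i)).2 ⟨j, hj, hne⟩
      have := hlt i
      omega
    have hW : ∀ i, (fun j => ((f i j : ℤ) : ℝ)) ∈ Submodule.span ℝ (Set.range (Dv s)) :=
      fun i => mem_span_Dv s (f i) (hyperL_props s (f i) (hmem i)).1 (hin i)
    haveI : FiniteDimensional ℝ (Submodule.span ℝ (Set.range (Dv s))) :=
      FiniteDimensional.span_of_finite ℝ (Set.finite_range _)
    have hli2 : LinearIndependent ℝ
        (fun i : Fin 6 => (⟨fun j => ((f i j : ℤ) : ℝ), hW i⟩ :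
          Submodule.span ℝ (Set.range (Dv s)))) := by
      apply LinearIndependent.of_comp (Submodule.span ℝ (Set.range (Dv s))).subtype
      exact hli
    have hcard := hli2.fintype_card_le_finrank
    have hfr : Module.finrank ℝ (Submodule.span ℝ (Set.range (Dv s))) ≤ 5 := by
      refine le_trans (finrank_span_le_card _) ?_
      rw [Set.toFinset_range]
      exact le_trans (Finset.card_image_le) (by simp)
    have h65 := le_trans hcard hfr
    simp at h65
  · -- Part 4
    refine ⟨bigF s, ?_, ?_, ?_, ?_⟩
    · intro i
      by_cases h : (i : ℕ) < 5
      · simp only [bigF, if_pos h]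
        exact svec_mem s _ h
      · simp only [bigF, if_neg h]
        exact wv_mem s _ (by omega) (by omega)
    · intro i h5
      simp only [bigF, if_pos h5]
      exact svec_norm s _ h5
    · intro i h5
      simp only [bigF, if_neg (by omega : ¬ (i : ℕ) < 5)]
      exact wv_norm s _ (by omega) (by omega)
    · rw [Fintype.linearIndependent_iff]
      intro c hc
      have hpt : ∀ (m : ℕ) (hm : m < 2*2+2+s),
          (∑ p : Fin (5+s), c p * ((bigF s p ⟨m, hm⟩ : ℤ) : ℝ)) = 0 := by
        intro m hm
        have h := congrFun hc ⟨m, hm⟩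
        rw [Finset.sum_apply] at h
        exact h
      have htail : ∀ i : Fin (5+s), 5 ≤ (i : ℕ) → c i = 0 := by
        intro i hi
        have hm : (i : ℕ)+1 < 2*2+2+s := by omega
        have hval : ((⟨(i : ℕ)+1, hm⟩ : Fin (2*2+2+s)) : ℕ) = (i : ℕ)+1 := rfl
        have h := hpt ((i : ℕ)+1) hm
        rw [Finset.sum_eq_single i ?_ ?_] at h
        · have h2 : bigF s i ⟨(i : ℕ)+1, hm⟩ = 2 := by
            simp only [bigF, if_neg (by omega : ¬ (i : ℕ) < 5), wv, hval]
            rw [if_neg (by omega : ¬ (i : ℕ) + 1 = 0)]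
            norm_num
          rw [h2] at h
          norm_num at h
          exact h
        · intro b _ hb
          have hz : bigF s b ⟨(i : ℕ)+1, hm⟩ = 0 := by
            by_cases hb5 : (b : ℕ) < 5
            · obtain ⟨hA, hB⟩ := avbv_le (b : ℕ) hb5
              simp only [bigF, if_pos hb5, svec, sv, hval]
              rw [if_neg (by omega), if_neg (by omega)]
            · simp only [bigF, if_neg hb5, wv, hval]
              rw [if_neg ?_, if_neg (by omega)]
              · norm_num
              · intro hcc
                exact hb (Fin.ext (by omega))
          rw [hz]
          norm_num
        · intro hni
          exact absurd (Finset.mem_univ i) hni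
      intro i
      by_cases hi5 : 5 ≤ (i : ℕ)
      · exact htail i hi5
      · have hEm : ∀ (m : ℕ) (hm : m < 2*2+2+s),
            c (emb5 s 0) * ((sv 1 2 m : ℤ) : ℝ) + c (emb5 s 1) * ((sv 1 3 m : ℤ) : ℝ)
              + c (emb5 s 2) * ((sv 2 3 m : ℤ) : ℝ) + c (emb5 s 3) * ((sv 1 4 m : ℤ) : ℝ)
              + c (emb5 s 4) * ((sv 1 5 m : ℤ) : ℝ) = 0 := by
          intro m hm
          have h := hpt m hm
          rw [sum5tail s (fun p => c p * ((bigF s p ⟨m, hm⟩ : ℤ) : ℝ))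
            (fun p hp => by
              show c p * ((bigF s p ⟨m, hm⟩ : ℤ) : ℝ) = 0
              rw [htail p hp]; ring)] at h
          exact h
        have e0 := hEm 0 (by omega)
        have e1 := hEm 1 (by omega)
        have e2 := hEm 2 (by omega)
        have e3 := hEm 3 (by omega)
        have e4 := hEm 4 (by omega)
        have e5 := hEm 5 (by omega)
        norm_num [sv] at e0 e1 e2 e3 e4 e5
        have h0 : c (emb5 s 0) = 0 := by linarith
        have h1 : c (emb5 s 1) = 0 := by linarith
        have h2 : c (emb5 s 2) = 0 := by linarith
        have h3 : c (emb5 s 3) = 0 := by linarith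
        have h4 : c (emb5 s 4) = 0 := by linarith
        have hcases : (i : ℕ) = 0 ∨ (i : ℕ) = 1 ∨ (i : ℕ) = 2 ∨ (i : ℕ) = 3 ∨ (i : ℕ) = 4 := by
          omega
        rcases hcases with h | h | h | h | h
        · rw [show i = emb5 s 0 from Fin.ext (by simp [emb5, h])]; exact h0
        · rw [show i = emb5 s 1 from Fin.ext (by simp [emb5, h])]; exact h1
        · rw [show i = emb5 s 2 from Fin.ext (by simp [emb5, h])]; exact h2
        · rw [show i = emb5 s 3 from Fin.ext (by simp [emb5, h])]; exact h3
        · rw [show i = emb5 s 4 from Fin.ext (by simp [emb5, h])]; exact h4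
end

section
/- For all integers g ≥ 1 and s ≥ 0, the lattice L(g,s) is a finite-index subgroup of the root lattice A_n (with n = 2g+1+s) of index [A_n : L(g,s)] = 2^{2g+s}; consequently det(L(g,s)) = 2^{2g+s}·√(2g+2+s). -/
set_option maxHeartbeats 1000000

/-- The root lattice `A_{N-1} = {v ∈ ℤ^N : ∑ v_i = 0}`. -/
def rootA (N : ℕ) : Submodule ℤ (Fin N → ℤ) where
  carrier := {v | ∑ j, v j = 0}
  add_mem' := by
    intro a b ha hb
    simp only [Set.mem_setOf_eq, Pi.add_apply, Finset.sum_add_distrib] at *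
    simp [ha, hb]
  zero_mem' := by simp
  smul_mem' := by
    intro c a ha
    simp only [Set.mem_setOf_eq, Pi.smul_apply, smul_eq_mul, ← Finset.mul_sum] at *
    simp [ha]

/-- The mod-2 "defect" map: `(F v)_j = v_{j+2} - ε_{j+2} v_1 mod 2`, where
`ε_i = 1` iff `i ≤ 2g+1`. -/
def Fmap (g s : ℕ) (v : Fin (2*g+2+s) → ℤ) : Fin (2*g+s) → ZMod 2 :=
  fun j => ((v ⟨j.1+2, by have := j.2; omega⟩ : ℤ) : ZMod 2)
    - (if j.1+2 ≤ 2*g+1 then ((v ⟨1, by omega⟩ : ℤ) : ZMod 2) else 0)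

lemma sum_uv (g s : ℕ) : ∑ j, uv g s j = 0 := by
  have h : ∑ j : Fin (2*g+2+s), uv g s j
      = ∑ j ∈ Finset.range (2*g+2+s),
          (if j = 0 then -(2*(g:ℤ)+1) else if j ≤ 2*g+1 then 1 else 0) := by
    rw [← Fin.sum_univ_eq_sum_range]; rfl
  rw [h]
  have hsplit : ∀ j ∈ Finset.range (2*g+2+s),
      (if j = 0 then -(2*(g:ℤ)+1) else if j ≤ 2*g+1 then 1 else 0)
      = (if j = 0 then -(2*(g:ℤ)+2) else 0) + (if j ≤ 2*g+1 then 1 else 0) := by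
    intro j _; split_ifs <;> omega
  rw [Finset.sum_congr rfl hsplit, Finset.sum_add_distrib, Finset.sum_ite_eq' _ 0]
  have h2 : ∑ j ∈ Finset.range (2*g+2+s), (if j ≤ 2*g+1 then (1:ℤ) else 0)
      = ((Finset.range (2*g+2+s)).filter (fun j => j ≤ 2*g+1)).card := by
    rw [Finset.sum_ite, Finset.sum_const, Finset.sum_const]; simp
  rw [h2, show (Finset.range (2*g+2+s)).filter (fun j => j ≤ 2*g+1)
      = Finset.range (2*g+2) from ?_]
  · simp
  · ext j; simp; omega

lemma sum_wv (N k : ℕ) (h1 : 1 ≤ k) (hk : k < N) : ∑ j, wv N k j = 0 := by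
  simp only [wv, Finset.sum_add_distrib]
  rw [show (fun j : Fin N => if (j:ℕ) = k then (2:ℤ) else 0)
      = fun j : Fin N => if j = (⟨k, hk⟩ : Fin N) then 2 else 0 from ?_]
  · have h0 : 0 < N := by omega
    rw [show (fun j : Fin N => if (j:ℕ) = 0 then (-2:ℤ) else 0)
        = fun j : Fin N => if j = (⟨0, h0⟩ : Fin N) then -2 else 0 from ?_]
    · simp
    · funext j; congr 1; simp [Fin.ext_iff]
  · funext j; congr 1; simp [Fin.ext_iff]

lemma hyperL_le_rootA (g s : ℕ) : hyperL g s ≤ rootA (2*g+2+s) := by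
  rw [hyperL, Submodule.span_le]
  rintro x (rfl | ⟨k, hk1, hk2, rfl⟩)
  · exact sum_uv g s
  · exact sum_wv _ k hk1 (by omega)

/-- `Fmap` as a `ℤ`-linear map. -/
def FL (g s : ℕ) : (Fin (2*g+2+s) → ℤ) →ₗ[ℤ] (Fin (2*g+s) → ZMod 2) where
  toFun := Fmap g s
  map_add' a b := by
    funext j
    simp only [Fmap, Pi.add_apply, Int.cast_add]
    split_ifs <;> ring
  map_smul' c a := by
    funext j
    simp only [Fmap, Pi.smul_apply, smul_eq_mul, Int.cast_mul, RingHom.id_apply,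
      zsmul_eq_mul]
    push_cast
    split_ifs <;> ring

lemma hyperL_le_ker (g s : ℕ) : hyperL g s ≤ LinearMap.ker (FL g s) := by
  rw [hyperL, Submodule.span_le]
  rintro x (rfl | ⟨k, hk1, hk2, rfl⟩) <;> rw [SetLike.mem_coe, LinearMap.mem_ker]
  · funext j
    show Fmap g s (uv g s) j = 0
    have h2 : uv g s ⟨j.1+2, by have := j.2; omega⟩
        = (if j.1+2 ≤ 2*g+1 then (1:ℤ) else 0) := by
      simp only [uv, Fin.val_mk]; split_ifs <;> first | omega | simp_all
    have h1 : uv g s ⟨1, by omega⟩ = 1 := by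
      simp only [uv, Fin.val_mk]; split_ifs <;> first | omega | simp_all
    simp only [Fmap, h1, h2]
    split_ifs <;> simp
  · funext j
    show Fmap g s (wv (2*g+2+s) k) j = 0
    have h2 : wv (2*g+2+s) k ⟨j.1+2, by have := j.2; omega⟩
        = (if j.1+2 = k then (2:ℤ) else 0) := by
      simp only [wv, Fin.val_mk]; split_ifs <;> first | omega | simp_all
    have h1 : wv (2*g+2+s) k ⟨1, by omega⟩ = (if 1 = k then (2:ℤ) else 0) := by
      simp only [wv, Fin.val_mk]; split_ifs <;> first | omega | simp_all
    simp only [Fmap, h1, h2]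
    split_ifs <;> simp <;> decide

/-- Any sum-zero vector killed by `Fmap` lies in `hyperL`. -/
lemma ker_le (g s : ℕ) (v : Fin (2*g+2+s) → ℤ) (hsum : ∑ j, v j = 0)
    (hF : Fmap g s v = 0) : v ∈ hyperL g s := by
  have hNpos : 0 < 2*g+2+s := by omega
  set v1 : ℤ := v ⟨1, by omega⟩ with hv1
  have hdvd : ∀ j : Fin (2*g+2+s), j.1 ≠ 0 →
      (2:ℤ) ∣ (v j - v1 * (if j.1 ≤ 2*g+1 then 1 else 0)) := by
    intro j hj
    rcases Nat.lt_or_ge j.1 2 with h2 | h2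
    · have hj1 : j = ⟨1, by omega⟩ := by apply Fin.ext; simp; omega
      rw [hj1, if_pos (by omega : 1 ≤ 2*g+1)]
      simp [hv1]
    · have hjlt : j.1 - 2 < 2*g+s := by have := j.2; omega
      have hFj := congrFun hF ⟨j.1 - 2, hjlt⟩
      simp only [Fmap, Pi.zero_apply, sub_eq_zero] at hFj
      have hco : (⟨j.1 - 2 + 2, by have := j.2; omega⟩ : Fin (2*g+2+s)) = j := by
        apply Fin.ext; simp; omega
      rw [hco] at hFj
      have hz : ((v j - v1 * (if j.1 ≤ 2*g+1 then 1 else 0) : ℤ) : ZMod 2) = 0 := by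
        push_cast
        rw [hFj]
        by_cases hle : j.1 ≤ 2*g+1
        · rw [if_pos (by omega : j.1 - 2 + 2 ≤ 2*g+1), if_pos hle, ← hv1]; ring
        · rw [if_neg (by omega : ¬ (j.1 - 2 + 2 ≤ 2*g+1)), if_neg hle]; ring
      exact_mod_cast (ZMod.intCast_zmod_eq_zero_iff_dvd _ 2).mp hz
  set d : Fin (2*g+2+s) → ℤ := fun j => if j.1 = 0 then 0
    else (v j - v1 * (if j.1 ≤ 2*g+1 then 1 else 0)) / 2 with hd
  have hdval : ∀ j : Fin (2*g+2+s), j.1 ≠ 0 →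
      2 * d j = v j - v1 * (if j.1 ≤ 2*g+1 then 1 else 0) := by
    intro j hj
    rw [hd]; simp only [if_neg hj]
    exact Int.mul_ediv_cancel' (hdvd j hj)
  have hdecomp : v = v1 • uv g s + ∑ j : Fin (2*g+2+s), d j • wv (2*g+2+s) j.1 := by
    funext i
    have hsum2 : ∀ f : Fin (2*g+2+s) → ℤ,
        (∑ j : Fin (2*g+2+s), f j • wv (2*g+2+s) j.1) i
        = (∑ j : Fin (2*g+2+s), f j * (if i.1 = j.1 then 2 else 0))
          + (∑ j : Fin (2*g+2+s), f j) * (if i.1 = 0 then -2 else 0) := by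
      intro f
      rw [Finset.sum_apply]
      simp only [Pi.smul_apply, smul_eq_mul, wv, mul_add]
      rw [Finset.sum_add_distrib, ← Finset.sum_mul]
    simp only [Pi.add_apply, Pi.smul_apply, smul_eq_mul, hsum2]
    have hfirst : (∑ j : Fin (2*g+2+s), d j * (if i.1 = j.1 then 2 else 0)) = d i * 2 := by
      rw [show (fun j : Fin (2*g+2+s) => d j * (if i.1 = j.1 then 2 else 0))
          = fun j : Fin (2*g+2+s) => if i = j then d j * 2 else 0 from ?_]
      · rw [Finset.sum_ite_eq]; simp
      · funext j
        by_cases h : i = j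
        · rw [if_pos h, if_pos (by rw [h])]
        · rw [if_neg h, if_neg (fun hh => h (Fin.ext hh)), mul_zero]
    rw [hfirst]
    by_cases hi : i.1 = 0
    · have hi0 : i = ⟨0, hNpos⟩ := Fin.ext hi
      rw [if_pos hi]
      have hd0 : d i = 0 := by rw [hd]; simp [hi]
      have h2sum : 2 * (∑ j : Fin (2*g+2+s), d j) = - (v i - v1 * uv g s i) := by
        have hptw : ∀ j : Fin (2*g+2+s), 2 * d j
            = (v j - v1 * uv g s j) - (if j = i then v j - v1 * uv g s j else 0) := by
          intro j
          by_cases hj : j = i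
          · rw [if_pos hj, hj, hd]; simp [hi]
          · have hj0 : j.1 ≠ 0 := by
              intro hc; exact hj (Fin.ext (by rw [hc, hi]))
            rw [if_neg hj, hdval j hj0, sub_zero]
            congr 2
            rw [uv]; simp only [if_neg hj0]
        rw [Finset.mul_sum, Finset.sum_congr rfl (fun j _ => hptw j), Finset.sum_sub_distrib]
        rw [show (fun j : Fin (2*g+2+s) => if j = i then v j - v1 * uv g s j else 0)
            = fun j : Fin (2*g+2+s) => if i = j then v j - v1 * uv g s j else 0 from ?_]
        · rw [Finset.sum_ite_eq, if_pos (Finset.mem_univ i)]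
          rw [Finset.sum_sub_distrib, ← Finset.mul_sum, hsum, sum_uv, mul_zero,
            sub_zero, zero_sub]
        · funext j; congr 1; simp [eq_comm]
      have huvi : uv g s i = -(2*(g:ℤ)+1) := by rw [hi0]; simp [uv]
      rw [hd0, huvi]
      rw [huvi] at h2sum
      linarith [h2sum]
    · rw [if_neg hi, mul_zero, add_zero]
      have huvi : uv g s i = (if i.1 ≤ 2*g+1 then 1 else 0) := by
        rw [uv]; simp only [if_neg hi]
      rw [huvi]
      linarith [hdval i hi]
  rw [hdecomp]
  apply Submodule.add_mem
  · exact Submodule.smul_mem _ _ (Submodule.subset_span (Or.inl rfl))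
  · apply Submodule.sum_mem
    intro j _
    by_cases hj : j.1 = 0
    · have hz : wv (2*g+2+s) j.1 = 0 := by
        funext i
        rw [wv, hj]
        by_cases hij : i.1 = 0 <;> simp [hij]
      rw [hz, smul_zero]
      exact Submodule.zero_mem _
    · apply Submodule.smul_mem
      apply Submodule.subset_span
      exact Or.inr ⟨j.1, by omega, by have := j.2; omega, rfl⟩

/-- `Fmap` as a group hom from the root lattice. -/
def Fhom (g s : ℕ) : (rootA (2*g+2+s)).toAddSubgroup →+ (Fin (2*g+s) → ZMod 2) where
  toFun v := Fmap g s v.1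
  map_zero' := by funext j; simp [Fmap]
  map_add' a b := by
    funext j
    simp only [Fmap, AddSubgroup.coe_add, Pi.add_apply, Int.cast_add]
    split_ifs <;> ring

def avec (g s : ℕ) (t : Fin (2*g+s) → ZMod 2) : Fin (2*g+2+s) → ℤ :=
  fun i => if h : 2 ≤ i.1 then ((t ⟨i.1 - 2, by have := i.2; omega⟩).val : ℤ) else 0

def vvec (g s : ℕ) (t : Fin (2*g+s) → ZMod 2) : Fin (2*g+2+s) → ℤ :=
  fun i => avec g s t i - if i.1 = 0 then (∑ j, avec g s t j) else 0

lemma Fhom_surj (g s : ℕ) : Function.Surjective (Fhom g s) := by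
  intro t
  have hv0 : vvec g s t ∈ rootA (2*g+2+s) := by
    show ∑ j, vvec g s t j = 0
    unfold vvec
    rw [Finset.sum_sub_distrib]
    rw [show (fun i : Fin (2*g+2+s) => if (i:ℕ) = 0 then (∑ j, avec g s t j) else 0)
        = fun i : Fin (2*g+2+s) =>
            if i = (⟨0, by omega⟩ : Fin (2*g+2+s)) then (∑ j, avec g s t j) else 0 from ?_]
    · rw [Finset.sum_ite_eq' Finset.univ]
      simp
    · funext i; congr 1; exact propext ⟨fun h => Fin.ext h, fun h => by rw [h]⟩
  refine ⟨⟨vvec g s t, hv0⟩, ?_⟩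
  funext j
  show Fmap g s (vvec g s t) j = t j
  have h1 : vvec g s t ⟨1, by omega⟩ = 0 := by
    unfold vvec avec
    rw [dif_neg (by omega : ¬ (2 ≤ (1:ℕ))), if_neg (by omega : ¬ (1 = 0))]
    ring
  have h2 : vvec g s t ⟨j.1+2, by have := j.2; omega⟩ = ((t j).val : ℤ) := by
    unfold vvec avec
    rw [dif_pos (by omega : 2 ≤ j.1+2), if_neg (by omega : ¬ (j.1+2 = 0))]
    simp
  simp only [Fmap, h1, h2, Int.cast_zero, Int.cast_natCast, ZMod.natCast_val, ZMod.cast_id]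
  split_ifs <;> simp

/-- For all `g ≥ 1`, `s ≥ 0`, the lattice `L(g,s)` is a finite-index subgroup of the
root lattice `A_n` (`n = 2g+1+s`) of index `[A_n : L(g,s)] = 2^{2g+s}`; consequently
`det L(g,s) = [A_n : L(g,s)]·√(n+1) = 2^{2g+s}·√(2g+2+s)`. -/
theorem stmt5 (g s : ℕ) (hg : 1 ≤ g) :
    hyperL g s ≤ rootA (2*g+2+s) ∧
    (hyperL g s).toAddSubgroup.relIndex (rootA (2*g+2+s)).toAddSubgroup
      = 2^(2*g+s) ∧
    (((hyperL g s).toAddSubgroup.relIndex (rootA (2*g+2+s)).toAddSubgroup : ℝ) *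
        Real.sqrt (2*g+2+s) = 2^(2*g+s) * Real.sqrt (2*g+2+s)) := by
  have key : (hyperL g s).toAddSubgroup.relIndex (rootA (2*g+2+s)).toAddSubgroup
      = 2^(2*g+s) := by
    rw [AddSubgroup.relIndex]
    have hker : (hyperL g s).toAddSubgroup.addSubgroupOf
        (rootA (2*g+2+s)).toAddSubgroup = (Fhom g s).ker := by
      ext x
      rw [AddSubgroup.mem_addSubgroupOf, AddMonoidHom.mem_ker]
      constructor
      · intro h
        have h2 := hyperL_le_ker g s h
        rw [LinearMap.mem_ker] at h2
        exact h2
      · intro h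
        exact ker_le g s x.1 x.2 h
    rw [hker, AddSubgroup.index_ker]
    have hr : (Fhom g s).range = ⊤ :=
      AddMonoidHom.range_eq_top_of_surjective _ (Fhom_surj g s)
    rw [hr]
    rw [Nat.card_congr AddSubgroup.topEquiv.toEquiv]
    simp [Nat.card_eq_fintype_card]
  refine ⟨hyperL_le_rootA g s, key, ?_⟩
  rw [key]
  push_cast
  ring
end

section
/- The group of permutations σ of {0,…,n} such that σ(0) = 0 and the coordinate action of σ on ℤ^{n+1} maps L_G bijectively onto itself is isomorphic to Aut(G), the automorphism group of the abelian group G; the isomorphism sends an automorphism φ of G to the permutation i ↦ g^{-1}(φ(g(i))). -/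
/-- The lattice `L_G` attached to an enumeration `g` of a finite abelian group `G`:
integer vectors with coordinate sum zero that combine the group elements to zero. -/
def LG {n : ℕ} {G : Type} [AddCommGroup G] (g : Fin (n+1) → G) :
    Set (Fin (n+1) → ℤ) :=
  {x | (∑ i, x i) = 0 ∧ (∑ i, x i • g i) = 0}

/-- The group of permutations `σ` of `{0,…,n}` with `σ 0 = 0` whose coordinate action
on `ℤ^{n+1}` maps `L_G` bijectively onto itself. -/
def permStab {n : ℕ} {G : Type} [AddCommGroup G] (g : Fin (n+1) → G) :
    Subgroup (Equiv.Perm (Fin (n+1))) where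
  carrier := {σ | σ 0 = 0 ∧
    ∀ x : Fin (n+1) → ℤ, x ∈ LG g ↔ (fun j => x (σ j)) ∈ LG g}
  one_mem' := ⟨rfl, fun _ => Iff.rfl⟩
  mul_mem' := by
    rintro σ τ ⟨hσ0, hσ⟩ ⟨hτ0, hτ⟩
    refine ⟨?_, ?_⟩
    · show σ (τ 0) = 0
      rw [hτ0, hσ0]
    · intro x
      exact (hσ x).trans (hτ (fun j => x (σ j)))
  inv_mem' := by
    rintro σ ⟨hσ0, hσ⟩
    refine ⟨?_, ?_⟩
    · have h := σ.symm_apply_apply 0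
      rw [hσ0] at h
      exact h
    · intro x
      have h := hσ (fun j => x (σ⁻¹ j))
      have he : (fun j => (fun j' => x (σ⁻¹ j')) (σ j)) = x := by
        funext j; simp
      rw [he] at h
      exact h.symm

section aux
variable {n : ℕ} {G : Type} [AddCommGroup G]

lemma sum_single_smul (g : Fin (n+1) → G) (j : Fin (n+1)) (c : ℤ) :
    ∑ i, ((Pi.single j c : Fin (n+1) → ℤ) i) • g i = c • g j := by
  rw [Finset.sum_eq_single j]
  · simp
  · intro b _ hb; rw [Pi.single_eq_of_ne hb]; simp
  · simp

def permOf (g : Fin (n+1) ≃ G) (φ : AddAut G) : Equiv.Perm (Fin (n+1)) :=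
  (g.trans φ.toEquiv).trans g.symm

lemma sum_perm_smul (g : Fin (n+1) → G) (σ : Equiv.Perm (Fin (n+1)))
    (x : Fin (n+1) → ℤ) :
    ∑ i, x (σ i) • g i = ∑ k, x k • g (σ⁻¹ k) := by
  rw [← Equiv.sum_comp σ (fun k => x k • g (σ⁻¹ k))]
  simp

lemma permOf_inv_apply (g : Fin (n+1) ≃ G) (φ : AddAut G) (k : Fin (n+1)) :
    g ((permOf g φ)⁻¹ k) = φ.symm (g k) := by
  simp [permOf, Equiv.Perm.inv_def]

lemma permOf_mem (g : Fin (n+1) ≃ G) (hg0 : g 0 = 0) (φ : AddAut G) :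
    permOf g φ ∈ permStab (⇑g) := by
  constructor
  · show g.symm (φ (g 0)) = 0
    rw [hg0, map_zero]
    rw [← hg0, Equiv.symm_apply_apply]
  · intro x
    constructor <;> rintro ⟨h1, h2⟩
    · refine ⟨?_, ?_⟩
      · rw [Equiv.sum_comp (permOf g φ) x]; exact h1
      · rw [sum_perm_smul]
        have : ∀ k, g ((permOf g φ)⁻¹ k) = φ.symm (g k) := permOf_inv_apply g φ
        simp only [this]
        have : ∑ k, x k • φ.symm (g k) = φ.symm (∑ k, x k • g k) := by
          rw [map_sum]
          exact Finset.sum_congr rfl fun k _ => (map_zsmul φ.symm.toAddMonoidHom _ _).symm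
        rw [this, h2, map_zero]
    · refine ⟨?_, ?_⟩
      · rw [← Equiv.sum_comp (permOf g φ) x]; exact h1
      · have h2' := h2
        rw [sum_perm_smul] at h2'
        simp only [permOf_inv_apply] at h2'
        have : ∑ k, x k • φ.symm (g k) = φ.symm (∑ k, x k • g k) := by
          rw [map_sum]
          exact Finset.sum_congr rfl fun k _ => (map_zsmul φ.symm.toAddMonoidHom _ _).symm
        rw [this] at h2'
        exact (EmbeddingLike.map_eq_zero_iff).mp h2'

def stabHom (g : Fin (n+1) ≃ G) (hg0 : g 0 = 0) : Multiplicative (AddAut G) →* permStab (⇑g) :=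
  MonoidHom.mk' (fun φ => ⟨permOf g (Multiplicative.toAdd φ), permOf_mem g hg0 (Multiplicative.toAdd φ)⟩) (by
    intro φ ψ
    apply Subtype.ext
    apply Equiv.ext
    intro i
    show g.symm ((Multiplicative.toAdd (φ * ψ)) (g i)) = g.symm ((Multiplicative.toAdd φ) (g (g.symm ((Multiplicative.toAdd ψ) (g i)))))
    simp [AddAut.add_apply])

end aux

/-- The group of permutations of `{0,…,n}` fixing `0` whose coordinate action preserves
`L_G` is isomorphic to `Aut(G)`, the isomorphism sending an automorphism `φ` of `G`
to the permutation `i ↦ g⁻¹(φ(g(i)))`. -/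
theorem stmt11 (n : ℕ) (G : Type) [AddCommGroup G] [Fintype G]
    (hcard : Fintype.card G = n + 1)
    (g : Fin (n+1) ≃ G) (hg0 : g 0 = 0) :
    ∃ e : Multiplicative (AddAut G) ≃* permStab (⇑g),
      ∀ (φ : AddAut G) (i : Fin (n+1)),
        ((e (Multiplicative.ofAdd φ) : Equiv.Perm (Fin (n+1))) i) = g.symm (φ (g i)) := by
  have hinj : Function.Injective (stabHom g hg0) := by
    intro φ ψ h
    have h' : permOf g (Multiplicative.toAdd φ) = permOf g (Multiplicative.toAdd ψ) := congrArg Subtype.val h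
    apply Multiplicative.toAdd.injective
    ext a
    have := congrFun (congrArg (fun (e : Equiv.Perm (Fin (n+1))) => ⇑e) h') (g.symm a)
    simpa [permOf] using congrArg g this
  have hsurj : Function.Surjective (stabHom g hg0) := by
    rintro ⟨σ, hσ0, hσ⟩
    -- define h := g ∘ σ⁻¹ ∘ g.symm and show it is additive
    set h : G ≃ G := (g.symm.trans (σ⁻¹ : Equiv.Perm (Fin (n+1)))).trans g with hdef
    have hinv0 : σ⁻¹ 0 = 0 := by
      conv_lhs => rw [← hσ0]
      exact σ.symm_apply_apply 0
    have hadd : ∀ a b : G, h (a + b) = h a + h b := by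
      intro a b
      set x : Fin (n+1) → ℤ :=
        Pi.single (g.symm a) 1 + Pi.single (g.symm b) 1
          - Pi.single (g.symm (a + b)) 1 - Pi.single 0 1 with hx
      have hxmem : x ∈ LG ⇑g := by
        constructor
        · simp [hx, Finset.sum_sub_distrib, Finset.sum_add_distrib,
            Finset.sum_pi_single']
        · have : ∑ i, x i • g i =
              (1:ℤ) • g (g.symm a) + (1:ℤ) • g (g.symm b)
                - (1:ℤ) • g (g.symm (a+b)) - (1:ℤ) • g 0 := by
            simp only [hx, Pi.sub_apply, Pi.add_apply, sub_smul, add_smul,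
              Finset.sum_sub_distrib, Finset.sum_add_distrib, sum_single_smul]
          rw [this]
          simp [hg0]
      have hmem2 := (hσ x).mp hxmem
      have key := hmem2.2
      rw [sum_perm_smul] at key
      have key2 : (1:ℤ) • g (σ⁻¹ (g.symm a)) + (1:ℤ) • g (σ⁻¹ (g.symm b))
          - (1:ℤ) • g (σ⁻¹ (g.symm (a+b))) - (1:ℤ) • g (σ⁻¹ 0) = 0 := by
        rw [← key]
        simp only [hx, Pi.sub_apply, Pi.add_apply, sub_smul, add_smul,
          Finset.sum_sub_distrib, Finset.sum_add_distrib]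
        congr 1
        · congr 1
          · congr 1 <;> exact (sum_single_smul (fun k => g (σ⁻¹ k)) _ 1).symm
          · exact (sum_single_smul (fun k => g (σ⁻¹ k)) _ 1).symm
        · exact (sum_single_smul (fun k => g (σ⁻¹ k)) _ 1).symm
      simp only [one_smul, hinv0, hg0] at key2
      have : g (σ⁻¹ (g.symm a)) + g (σ⁻¹ (g.symm b)) - g (σ⁻¹ (g.symm (a+b))) = 0 := by
        simpa using key2
      have := sub_eq_zero.mp this
      show g (σ⁻¹ (g.symm (a+b))) = g (σ⁻¹ (g.symm a)) + g (σ⁻¹ (g.symm b))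
      exact this.symm
    set ψ : Multiplicative (AddAut G) := Multiplicative.ofAdd (AddEquiv.mk' h hadd) with hψ
    refine ⟨ψ⁻¹, ?_⟩
    have hperm : permOf g (Multiplicative.toAdd ψ) = σ⁻¹ := by
      apply Equiv.ext
      intro i
      show g.symm (h (g i)) = σ⁻¹ i
      simp [hdef]
    have h1 : stabHom g hg0 ψ = ⟨σ⁻¹, (permStab (⇑g)).inv_mem ⟨hσ0, hσ⟩⟩ := by
      exact Subtype.ext hperm
    calc stabHom g hg0 ψ⁻¹ = (stabHom g hg0 ψ)⁻¹ := map_inv _ _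
      _ = (⟨σ⁻¹, (permStab (⇑g)).inv_mem ⟨hσ0, hσ⟩⟩ : permStab (⇑g))⁻¹ := by rw [h1]
      _ = ⟨σ, hσ0, hσ⟩ := by ext : 1; simp
  refine ⟨MulEquiv.ofBijective _ ⟨hinj, hsurj⟩, ?_⟩
  intro φ i
  rfl
end

section
/- Every automorphism φ of G with φ(S) = S induces, via i ↦ g^{-1}(φ(g(i))), a permutation of {0,…,n} fixing 0 whose coordinate action on ℤ^{n+1} maps L_G(S) bijectively onto itself; and since S generates G, the resulting map is a group isomorphism from {φ ∈ Aut(G) : φ(S) = S} onto the group of permutations σ of {0,…,n} with σ(0) = 0 whose coordinate action preserves L_G(S). -/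
/-- The (multiplicative) group structure on `AddAut G` by composition, as in the older Mathlib. -/
instance addAutGroupOld {A : Type} [Add A] : Group (AddAut A) where
  mul g h := AddEquiv.trans h g
  one := AddEquiv.refl _
  inv := AddEquiv.symm
  mul_assoc _ _ _ := rfl
  one_mul _ := rfl
  mul_one _ := rfl
  inv_mul_cancel := AddEquiv.self_trans_symm

/-- The subgroup of automorphisms `φ` of `G` with `φ(S) = S`. -/
def autStabS {G : Type} [AddCommGroup G] (S : Set G) : Subgroup (AddAut G) where
  carrier := {φ | (φ : G → G) '' S = S}
  one_mem' := by show (fun x => x) '' S = S; simp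
  mul_mem' := by
    intro φ ψ hφ hψ
    show (fun x => φ (ψ x)) '' S = S
    rw [← Set.image_image, hψ, hφ]
  inv_mem' := by
    intro φ hφ
    show (φ.symm : G → G) '' S = S
    conv_lhs => rw [← hφ]
    rw [Set.image_image]
    simp


section Aux

variable {n : ℕ} {G : Type} [AddCommGroup G] (g : Fin (n+1) → G)

/-- The evaluation homomorphism `ℤ^{n+1} →+ G`. -/
def piHom : (Fin (n+1) → ℤ) →+ G where
  toFun c := ∑ i, c i • g i
  map_zero' := by simp
  map_add' a b := by simp [add_smul, Finset.sum_add_distrib]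

lemma piHom_apply (c : Fin (n+1) → ℤ) : piHom g c = ∑ i, c i • g i := rfl

lemma piHom_single (i : Fin (n+1)) : piHom g (Pi.single i 1) = g i := by
  simp [piHom, Pi.single_apply, ite_smul, Finset.sum_ite_eq']

lemma piHom_surjective (hgen : AddSubgroup.closure (Set.range g) = ⊤) :
    Function.Surjective (piHom g) := by
  rw [← AddMonoidHom.range_eq_top, ← top_le_iff, ← hgen, AddSubgroup.closure_le]
  rintro _ ⟨i, rfl⟩
  exact ⟨Pi.single i 1, piHom_single g i⟩

lemma sub_single_sum (hg0 : g 0 = 0) (d : Fin (n+1) → ℤ) (s : ℤ) :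
    ∑ i, (d i - s * (if i = 0 then 1 else 0)) • g i = ∑ i, d i • g i := by
  simp [sub_smul, Finset.sum_sub_distrib, mul_ite, ite_smul, Finset.sum_ite_eq', hg0]

lemma key_mem (hg0 : g 0 = 0) {σ : Equiv.Perm (Fin (n+1))} (hσ : σ ∈ permStab g)
    {c : Fin (n+1) → ℤ} (hc : piHom g c = 0) : piHom g (fun j => c (σ j)) = 0 := by
  obtain ⟨hσ0, hσL⟩ := hσ
  set s : ℤ := ∑ j, c j with hs
  have hx : (fun i => c i - s * (if i = 0 then 1 else 0)) ∈ LG g := by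
    constructor
    · simp [Finset.sum_sub_distrib, mul_ite, Finset.sum_ite_eq', ← hs]
    · rw [sub_single_sum g hg0 c s, ← piHom_apply, hc]
  have hx2 := ((hσL _).mp hx).2
  have heq : ∀ j : Fin (n+1), (if σ j = 0 then (1:ℤ) else 0) = (if j = 0 then 1 else 0) := by
    intro j
    have h : (σ j = 0) ↔ (j = 0) :=
      ⟨fun hh => σ.injective (hh.trans hσ0.symm), fun hh => hh ▸ hσ0⟩
    simp [h]
  simp only [heq] at hx2
  rw [piHom_apply, ← sub_single_sum g hg0 (fun j => c (σ j)) s]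
  exact hx2

/-- Precomposition with a permutation as an additive hom on `ℤ^{n+1}`. -/
def compHom (τ : Equiv.Perm (Fin (n+1))) : (Fin (n+1) → ℤ) →+ (Fin (n+1) → ℤ) where
  toFun c := fun j => c (τ j)
  map_zero' := rfl
  map_add' _ _ := rfl

variable (hg0 : g 0 = 0) (hgen : AddSubgroup.closure (Set.range g) = ⊤)

/-- The endomorphism of `G` induced by a lattice-preserving permutation. -/
noncomputable def liftφ (σ : permStab g) : G →+ G :=
  (piHom g).liftOfRightInverse (Function.surjInv (piHom_surjective g hgen))
    (Function.rightInverse_surjInv (piHom_surjective g hgen))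
    ⟨(piHom g).comp (compHom ((σ : Equiv.Perm (Fin (n+1)))⁻¹)),
     fun c hc => key_mem g hg0 (inv_mem σ.2) (AddMonoidHom.mem_ker.mp hc)⟩

lemma liftφ_piHom (σ : permStab g) (c : Fin (n+1) → ℤ) :
    liftφ g hg0 hgen σ (piHom g c)
      = piHom g (fun j => c ((σ : Equiv.Perm (Fin (n+1)))⁻¹ j)) :=
  AddMonoidHom.liftOfRightInverse_comp_apply _ _ _ _ c

lemma liftφ_g (σ : permStab g) (i : Fin (n+1)) :
    liftφ g hg0 hgen σ (g i) = g ((σ : Equiv.Perm (Fin (n+1))) i) := by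
  rw [← piHom_single g i, liftφ_piHom]
  have : (fun j => (Pi.single i 1 : Fin (n+1) → ℤ) ((σ : Equiv.Perm (Fin (n+1)))⁻¹ j))
      = Pi.single ((σ : Equiv.Perm (Fin (n+1))) i) (1:ℤ) := by
    funext j
    simp only [Pi.single_apply]
    congr 1
    exact propext ⟨fun h => by subst h; simp, fun h => by subst h; simp⟩
  rw [this, piHom_single]

lemma liftφ_liftφ (σ τ : permStab g) (y : G) :
    liftφ g hg0 hgen σ (liftφ g hg0 hgen τ y) = liftφ g hg0 hgen (σ * τ) y := by
  obtain ⟨c, rfl⟩ := piHom_surjective g hgen y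
  rw [liftφ_piHom, liftφ_piHom, liftφ_piHom]
  rfl

lemma liftφ_one (y : G) : liftφ g hg0 hgen 1 y = y := by
  obtain ⟨c, rfl⟩ := piHom_surjective g hgen y
  rw [liftφ_piHom]
  rfl

/-- The automorphism of `G` induced by a lattice-preserving permutation. -/
noncomputable def liftAut (σ : permStab g) : AddAut G where
  toFun := liftφ g hg0 hgen σ
  invFun := liftφ g hg0 hgen σ⁻¹
  left_inv y := by rw [liftφ_liftφ, inv_mul_cancel, liftφ_one]
  right_inv y := by rw [liftφ_liftφ, mul_inv_cancel, liftφ_one]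
  map_add' := (liftφ g hg0 hgen σ).map_add

end Aux

/-- Every automorphism `φ` of `G` with `φ(S) = S` induces, via `i ↦ g⁻¹(φ(g(i)))`,
a permutation of `{0,…,n}` fixing `0` preserving `L_G(S)`; since `S` generates `G`
this gives a group isomorphism `{φ ∈ Aut(G) : φ(S) = S} ≅ {σ ∈ S_{n+1} : σ(0) = 0,
σ preserves L_G(S)}`, the permutation `e φ` being determined by `g(e φ i) = φ(g i)`. -/
theorem stmt12 (n : ℕ) (G : Type) [AddCommGroup G]
    (g : Fin (n+1) → G) (hginj : Function.Injective g) (hg0 : g 0 = 0)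
    (hgen : AddSubgroup.closure (Set.range g) = ⊤) :
    ∃ e : autStabS (Set.range g) ≃* permStab g,
      ∀ (φ : autStabS (Set.range g)) (i : Fin (n+1)),
        g ((e φ : Equiv.Perm (Fin (n+1))) i) = (φ : AddAut G) (g i) := by
  classical
  -- the induced map on indices
  have hφg : ∀ (φ : autStabS (Set.range g)) (i : Fin (n+1)),
      ∃ j, g j = (φ : AddAut G) (g i) := by
    intro φ i
    have h1 : (φ : AddAut G) (g i) ∈ ((φ : AddAut G) : G → G) '' Set.range g :=
      ⟨g i, ⟨i, rfl⟩, rfl⟩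
    rw [φ.2] at h1
    exact h1
  choose F hF using hφg
  have hFinj : ∀ φ, Function.Injective (F φ) := by
    intro φ i i' h
    have h2 := congrArg g h
    rw [hF, hF] at h2
    exact hginj ((φ : AddAut G).injective h2)
  set E : autStabS (Set.range g) → Equiv.Perm (Fin (n+1)) :=
    fun φ => Equiv.ofBijective (F φ) (Finite.injective_iff_bijective.mp (hFinj φ)) with hEdef
  have hE : ∀ φ i, g (E φ i) = (φ : AddAut G) (g i) := fun φ i => hF φ i
  -- key sum identity
  have hsum : ∀ (φ : autStabS (Set.range g)) (x : Fin (n+1) → ℤ),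
      ∑ i, x (E φ i) • g i = (φ : AddAut G).symm (∑ i, x i • g i) := by
    intro φ x
    calc ∑ i, x (E φ i) • g i
        = ∑ i, x (E φ i) • ((φ : AddAut G).symm (g (E φ i))) := by
          refine Finset.sum_congr rfl fun i _ => ?_
          rw [hE φ i, AddEquiv.symm_apply_apply]
      _ = (φ : AddAut G).symm (∑ i, x (E φ i) • g (E φ i)) := by
          rw [map_sum]
          exact Finset.sum_congr rfl fun i _ => (map_zsmul _ _ _).symm
      _ = (φ : AddAut G).symm (∑ i, x i • g i) := by
          rw [Equiv.sum_comp (E φ) (fun i => x i • g i)]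
  -- membership of E φ in permStab
  have hmem : ∀ φ, E φ ∈ permStab g := by
    intro φ
    constructor
    · apply hginj
      rw [hE φ 0, hg0, map_zero]
    · intro x
      constructor
      · rintro ⟨h1, h2⟩
        exact ⟨by rw [Equiv.sum_comp (E φ) x]; exact h1,
          by rw [hsum φ x, h2, map_zero]⟩
      · rintro ⟨h1, h2⟩
        refine ⟨by rw [← Equiv.sum_comp (E φ) x]; exact h1, ?_⟩
        have h3 : (φ : AddAut G).symm (∑ i, x i • g i) = (φ : AddAut G).symm 0 := by
          rw [map_zero, ← hsum φ x]; exact h2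
        exact (φ : AddAut G).symm.injective h3
  -- membership of liftAut in autStabS
  have hmemA : ∀ σ : permStab g,
      (liftAut g hg0 hgen σ : AddAut G) ∈ autStabS (Set.range g) := by
    intro σ
    ext y
    constructor
    · rintro ⟨_, ⟨i, rfl⟩, rfl⟩
      exact ⟨(σ : Equiv.Perm (Fin (n+1))) i, (liftφ_g g hg0 hgen σ i).symm⟩
    · rintro ⟨j, rfl⟩
      refine ⟨g ((σ : Equiv.Perm (Fin (n+1)))⁻¹ j), ⟨_, rfl⟩, ?_⟩
      show liftφ g hg0 hgen σ _ = _
      rw [liftφ_g g hg0 hgen σ]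
      simp
  refine ⟨{ toFun := fun φ => ⟨E φ, hmem φ⟩,
            invFun := fun σ => ⟨liftAut g hg0 hgen σ, hmemA σ⟩,
            left_inv := ?_, right_inv := ?_, map_mul' := ?_ }, fun φ i => hE φ i⟩
  · intro φ
    apply Subtype.ext
    apply AddEquiv.toAddMonoidHom_injective
    apply AddMonoidHom.eq_of_eqOn_dense hgen
    rintro _ ⟨i, rfl⟩
    show liftφ g hg0 hgen _ (g i) = (φ : AddAut G) (g i)
    rw [liftφ_g, hE]
  · intro σ
    apply Subtype.ext
    apply Equiv.ext
    intro i
    apply hginj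
    show g (E ⟨liftAut g hg0 hgen σ, hmemA σ⟩ i) = g ((σ : Equiv.Perm (Fin (n+1))) i)
    rw [hE ⟨liftAut g hg0 hgen σ, hmemA σ⟩ i]
    exact liftφ_g g hg0 hgen σ i
  · intro φ ψ
    apply Subtype.ext
    apply Equiv.ext
    intro i
    apply hginj
    show g (E (φ * ψ) i) = g (E φ (E ψ i))
    rw [hE (φ * ψ) i, hE φ (E ψ i), hE ψ i]
    rfl
end

section
/- The group of permutations σ of {0,…,n} such that σ(0) = 0 and the coordinate action of σ on ℤ^{n+1} maps L bijectively onto itself is isomorphic to Aut(G), the automorphism group of the abelian group G = E(𝔽_q) of rational points. -/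
section Aux

variable {n : ℕ} {G : Type} [AddCommGroup G]

private def indVec (a b c d : Fin (n+1)) : Fin (n+1) → ℤ := fun j =>
  (if j = a then (1:ℤ) else 0) + (if j = b then 1 else 0)
    - (if j = c then 1 else 0) - (if j = d then 1 else 0)

private lemma sum_indVec (a b c d : Fin (n+1)) : ∑ j, indVec a b c d j = 0 := by
  simp [indVec, Finset.sum_add_distrib, Finset.sum_sub_distrib, Finset.sum_ite_eq']

private lemma sum_indVec_smul (h : Fin (n+1) → G) (a b c d : Fin (n+1)) :
    ∑ j, indVec a b c d j • h j = h a + h b - h c - h d := by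
  simp [indVec, add_smul, sub_smul, ite_smul, Finset.sum_add_distrib,
    Finset.sum_sub_distrib, Finset.sum_ite_eq']

private lemma sum_reindex (g : Fin (n+1) → G) (σ : Equiv.Perm (Fin (n+1)))
    (x : Fin (n+1) → ℤ) :
    ∑ i, x (σ i) • g i = ∑ j, x j • g (σ.symm j) := by
  rw [← Equiv.sum_comp σ (fun j => x j • g (σ.symm j))]
  simp

/-- the permutation induced by an automorphism -/
private def toPerm (g : Fin (n+1) ≃ G) (φ : AddAut G) : Equiv.Perm (Fin (n+1)) :=
  (g.trans φ.toEquiv).trans g.symm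

private lemma toPerm_mul (g : Fin (n+1) ≃ G) (φ ψ : AddAut G) :
    toPerm g (φ + ψ) = toPerm g φ * toPerm g ψ := by
  ext i; simp [toPerm]

private def toPermHom (g : Fin (n+1) ≃ G) :
    Multiplicative (AddAut G) →* Equiv.Perm (Fin (n+1)) :=
  MonoidHom.mk' (fun φ => toPerm g φ.toAdd) (fun φ ψ => toPerm_mul g φ.toAdd ψ.toAdd)

private lemma toPerm_mem (g : Fin (n+1) ≃ G) (hg0 : g 0 = 0) (φ : AddAut G) :
    toPerm g φ ∈ permStab ⇑g := by
  constructor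
  · show g.symm (φ (g 0)) = 0
    rw [hg0, map_zero]
    exact (Equiv.symm_apply_eq g).mpr hg0.symm
  · intro x
    have hsymm : (toPerm g φ).symm = toPerm g (-φ) := by
      have := map_inv (toPermHom g) (Multiplicative.ofAdd φ)
      simpa [toPermHom, Equiv.Perm.inv_def, toAdd_inv] using this.symm
    have h1 : ∑ i, x (toPerm g φ i) = ∑ i, x i := Equiv.sum_comp _ x
    have h2 : ∑ i, x (toPerm g φ i) • g i = (-φ : AddAut G) (∑ j, x j • g j) := by
      rw [sum_reindex ⇑g _ x, hsymm, map_sum]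
      refine Finset.sum_congr rfl fun j _ => ?_
      rw [map_zsmul]
      simp [toPerm]
    constructor
    · rintro ⟨hx1, hx2⟩
      refine ⟨by rw [h1, hx1], ?_⟩
      show ∑ i, x (toPerm g φ i) • g i = 0
      rw [h2, hx2, map_zero]
    · rintro ⟨hx1, hx2⟩
      have hx2' : ∑ i, x (toPerm g φ i) • g i = 0 := hx2
      rw [h2] at hx2'
      exact ⟨by rw [← h1, hx1], by
        have := (EmbeddingLike.map_eq_zero_iff (f := (-φ : AddAut G))).mp hx2'
        exact this⟩

/-- additivity of `g ∘ σ⁻¹ ∘ g.symm` for `σ` in the stabilizer -/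
private lemma add_of_mem (g : Fin (n+1) ≃ G) (hg0 : g 0 = 0)
    (σ : Equiv.Perm (Fin (n+1))) (hσ : σ ∈ permStab ⇑g) (P Q : G) :
    g (σ⁻¹ (g.symm (P + Q))) = g (σ⁻¹ (g.symm P)) + g (σ⁻¹ (g.symm Q)) := by
  obtain ⟨hσ0, hiff⟩ := hσ
  set a := g.symm P
  set b := g.symm Q
  set c := g.symm (P + Q)
  have hmem : indVec a b c 0 ∈ LG ⇑g := by
    refine ⟨sum_indVec a b c 0, ?_⟩
    rw [sum_indVec_smul ⇑g a b c 0]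
    simp [a, b, c, hg0]
  have hmem2 := (hiff (indVec a b c 0)).mp hmem
  have h2 := hmem2.2
  have : ∑ i, indVec a b c 0 (σ i) • g i
      = g (σ⁻¹ a) + g (σ⁻¹ b) - g (σ⁻¹ c) - g (σ⁻¹ 0) := by
    rw [sum_reindex ⇑g σ (indVec a b c 0)]
    have := sum_indVec_smul (fun j => g (σ.symm j)) a b c 0
    simpa [Equiv.Perm.inv_def] using this
  rw [this] at h2
  have h0 : σ⁻¹ (0 : Fin (n+1)) = 0 := by
    have := congrArg σ.symm hσ0
    simpa [Equiv.Perm.inv_def] using this.symm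
  rw [h0, hg0] at h2
  have := sub_eq_zero.mp (by simpa [sub_zero] using h2)
  simp only [Equiv.Perm.inv_def]
  linear_combination (norm := abel) -this

end Aux

open Classical in
/-- For the elliptic function field lattice `L` attached to the group
`G = E(𝔽_q)` of rational points of an elliptic curve over a finite field, the group
of permutations `σ` of `{0,…,n}` with `σ(0) = 0` whose coordinate action maps `L`
bijectively onto itself is isomorphic to `Aut(G)`. -/
theorem stmt13 (q : ℕ) (Fq : Type) [Field Fq] [Fintype Fq] (hq : Fintype.card Fq = q)
    (W : WeierstrassCurve Fq) [W.IsElliptic]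
    [Fintype W.toAffine.Point] (n : ℕ)
    (hcard : Fintype.card W.toAffine.Point = n + 1)
    (g : Fin (n+1) ≃ W.toAffine.Point) (hg0 : g 0 = 0) :
    ∃ e : Multiplicative (AddAut W.toAffine.Point) ≃* permStab (⇑g),
      ∀ (φ : AddAut W.toAffine.Point) (i : Fin (n+1)),
        ((e (Multiplicative.ofAdd φ) : Equiv.Perm (Fin (n+1))) i) = g.symm (φ (g i)) := by
    classical
  have hFmem : ∀ φ : Multiplicative (AddAut W.toAffine.Point), toPermHom g φ ∈ permStab ⇑g :=
    fun φ => toPerm_mem g hg0 φ.toAdd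
  let F : Multiplicative (AddAut W.toAffine.Point) →* permStab ⇑g :=
    (toPermHom g).codRestrict (permStab ⇑g) hFmem
  have hinj : Function.Injective F := by
    intro φ ψ h
    have h' : toPerm g φ.toAdd = toPerm g ψ.toAdd := congrArg Subtype.val h
    apply Multiplicative.toAdd.injective
    ext P
    have := congrArg (fun σ : Equiv.Perm (Fin (n+1)) => g (σ (g.symm P))) h'
    simpa [toPerm] using this
  have hsurj : Function.Surjective F := by
    rintro ⟨σ, hσ⟩
    have hinv := (permStab ⇑g).inv_mem hσ
    refine ⟨Multiplicative.ofAdd (AddEquiv.mk' (g.symm.trans (σ.trans g)) ?_), ?_⟩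
    · intro P Q
      have := add_of_mem g hg0 σ⁻¹ hinv P Q
      simpa using this
    · refine Subtype.ext (Equiv.ext fun i => ?_)
      show g.symm (g (σ (g.symm (g i)))) = σ i
      simp
  exact ⟨MulEquiv.ofBijective F ⟨hinj, hsurj⟩, fun φ i => rfl⟩
end

section
/- The map A_n → G sending v to v_0·P_0 + ⋯ + v_n·P_n is a surjective group homomorphism with kernel L; consequently the elliptic function field lattice L has index [A_n : L] = n+1 in A_n and determinant det(L) = (n+1)^{3/2}. -/
/-- The lattice attached to an enumeration `g` of a finite abelian group `G`, as a
ℤ-submodule of `ℤ^{n+1}`. -/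
def LGsub {n : ℕ} {G : Type} [AddCommGroup G] (g : Fin (n+1) → G) :
    Submodule ℤ (Fin (n+1) → ℤ) where
  carrier := {x | (∑ i, x i) = 0 ∧ (∑ i, x i • g i) = 0}
  zero_mem' := by simp
  add_mem' := by
    rintro a b ⟨ha1, ha2⟩ ⟨hb1, hb2⟩
    constructor
    · simp only [Pi.add_apply, Finset.sum_add_distrib, ha1, hb1, add_zero]
    · simp only [Pi.add_apply, add_smul, Finset.sum_add_distrib, ha2, hb2, add_zero]
  smul_mem' := by
    rintro c a ⟨ha1, ha2⟩
    have h : ∀ i, (c * a i) • g i = c • (a i • g i) := fun i => mul_smul c (a i) (g i)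
    constructor
    · simp only [Pi.smul_apply, smul_eq_mul, ← Finset.mul_sum, ha1, mul_zero]
    · simp only [Pi.smul_apply, smul_eq_mul, h, ← Finset.smul_sum, ha2, smul_zero]

open Classical in
/-- The map `A_n → G = E(𝔽_q)`, `v ↦ ∑ v_i·P_i`, is a surjective group homomorphism
with kernel the elliptic function field lattice `L`; consequently
`[A_n : L] = n+1` and `det L = (n+1)^{3/2}`. -/
theorem stmt16 (q : ℕ) (Fq : Type) [Field Fq] [Fintype Fq] (hq : Fintype.card Fq = q)
    (W : WeierstrassCurve Fq) [W.IsElliptic]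
    [Fintype W.toAffine.Point] (n : ℕ) (hn : 1 ≤ n)
    (hcard : Fintype.card W.toAffine.Point = n + 1)
    (g : Fin (n+1) ≃ W.toAffine.Point) (hg0 : g 0 = 0) :
    (∃ f : (rootA (n+1)) →+ W.toAffine.Point,
      (∀ v : rootA (n+1), f v = ∑ i, (v : Fin (n+1) → ℤ) i • g i) ∧
      Function.Surjective f ∧
      (∀ v : rootA (n+1), f v = 0 ↔ (v : Fin (n+1) → ℤ) ∈ LGsub ⇑g)) ∧
    (LGsub ⇑g).toAddSubgroup.relIndex (rootA (n+1)).toAddSubgroup = n + 1 ∧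
    (((LGsub ⇑g).toAddSubgroup.relIndex (rootA (n+1)).toAddSubgroup : ℝ) *
        Real.sqrt (n+1) = ((n+1 : ℝ)) ^ ((3 : ℝ)/2)) := by
  classical
  -- the big homomorphism from all of ℤ^{n+1}
  set F : (Fin (n+1) → ℤ) →+ W.toAffine.Point :=
    { toFun := fun v => ∑ i, v i • g i
      map_zero' := by simp
      map_add' := by intro a b; simp [add_smul, Finset.sum_add_distrib] } with hF
  set f : (rootA (n+1)) →+ W.toAffine.Point :=
    F.comp (rootA (n+1)).toAddSubgroup.subtype with hf
  have hfv : ∀ v : rootA (n+1), f v = ∑ i, (v : Fin (n+1) → ℤ) i • g i := by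
    intro v; rfl
  have hsurj : Function.Surjective f := by
    intro P
    set i := g.symm P with hi
    set v : Fin (n+1) → ℤ := fun j => (if j = i then 1 else 0) - (if j = 0 then 1 else 0)
      with hv
    have hmem : v ∈ rootA (n+1) := by
      show (∑ j, v j) = 0
      simp [hv, Finset.sum_sub_distrib]
    refine ⟨⟨v, hmem⟩, ?_⟩
    have : f ⟨v, hmem⟩ = ∑ j, v j • g j := hfv _
    rw [this]
    simp [hv, sub_smul, Finset.sum_sub_distrib, ite_smul, hg0, hi]
  have hker : ∀ v : rootA (n+1), f v = 0 ↔ (v : Fin (n+1) → ℤ) ∈ LGsub ⇑g := by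
    intro v
    constructor
    · intro h0
      exact ⟨v.2, by rw [← hfv v]; exact h0⟩
    · intro h0
      rw [hfv v]; exact h0.2
  have hrel : (LGsub ⇑g).toAddSubgroup.relIndex (rootA (n+1)).toAddSubgroup = n + 1 := by
    have hkereq : ((LGsub ⇑g).toAddSubgroup.addSubgroupOf
        (rootA (n+1)).toAddSubgroup) = f.ker := by
      ext x
      simp only [AddSubgroup.mem_addSubgroupOf, AddMonoidHom.mem_ker]
      exact (hker x).symm
    have : (LGsub ⇑g).toAddSubgroup.relIndex (rootA (n+1)).toAddSubgroup = f.ker.index := by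
      rw [AddSubgroup.relIndex, hkereq]
    rw [this, AddSubgroup.index, Nat.card_congr
      (QuotientAddGroup.quotientKerEquivOfSurjective f hsurj).toEquiv]
    rw [Nat.card_eq_fintype_card, hcard]
  refine ⟨⟨f, hfv, hsurj, hker⟩, hrel, ?_⟩
  rw [hrel]
  have h1 : ((n+1 : ℕ) : ℝ) = ((n : ℝ) + 1) := by push_cast; ring
  rw [h1]
  have hpos : (0:ℝ) ≤ (n : ℝ) + 1 := by positivity
  rw [Real.sqrt_eq_rpow]
  rw [show ((3:ℝ)/2) = 1 + 1/2 by norm_num, Real.rpow_add (by positivity), Real.rpow_one]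
end
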